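/- arXiv:0811.1678 — 6 statements merged into one kernel-verified Lean document; each statement's English description precedes it below -/
import Mathlib

section
/- For every j ∈ ℤ the following hold: P_j² = 1; P_{j+2}·P_{j+1}·P_j = D; the set {P_j, P_{j+1}, P_{j+2}} generates G; and the homomorphism from the free product ℤ/2 * ℤ/2 * ℤ/2 sending its three free order-2 generators to P_j, P_{j+1}, P_{j+2} respectively is an isomorphism onto G. -/
/-- The relators of the presentation ⟨A, B, C | A² = B² = C² = 1⟩. -/
def rels : Set (FreeGroup (Fin 3)) :=
  {FreeGroup.of 0 * FreeGroup.of 0, FreeGroup.of 1 * FreeGroup.of 1,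
   FreeGroup.of 2 * FreeGroup.of 2}

/-- `G` is the group ⟨A, B, C | A² = B² = C² = 1⟩, the free product of three copies of ℤ/2. -/
abbrev G : Type := PresentedGroup rels

def A : G := PresentedGroup.of 0
def B : G := PresentedGroup.of 1
def C : G := PresentedGroup.of 2

/-- The distinguished element `D = C·B·A`. -/
def D : G := C * B * A

/-
The cyclic shift A ↦ B ↦ C ↦ D·A·D⁻¹ respects the relations, fixes D = C·B·A and has the
inverse A ↦ D⁻¹·C·D, B ↦ A, C ↦ B, so it is an automorphism `rotate` of G. Its cube agrees
with conjugation by D on the generators, hence rotate^(3m) = conj(Dᵐ) and P_j = rotate^j(A)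
for every j ∈ ℤ. The automorphism rotate^j sends A, B, C to P_j, P_{j+1}, P_{j+2} and fixes D,
which gives all four claims at once.
-/

lemma conj_sq_eq_one {H : Type*} [Group H] {x : H} (g : H) (hx : x ^ 2 = 1) :
    (g * x * g⁻¹) ^ 2 = 1 := by
  rw [← MulAut.conj_apply, ← map_pow, hx, map_one]

namespace G

open PresentedGroup

lemma A_sq : A ^ 2 = 1 := one_of_mem (by simp [rels, sq])

lemma B_sq : B ^ 2 = 1 := one_of_mem (by simp [rels, sq])

lemma C_sq : C ^ 2 = 1 := one_of_mem (by simp [rels, sq])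

variable {H : Type*} [Group H]

def lift (x y z : H) (hx : x ^ 2 = 1) (hy : y ^ 2 = 1) (hz : z ^ 2 = 1) : G →* H :=
  toGroup (f := ![x, y, z]) (by rintro r (rfl | rfl | rfl) <;> simp [← sq, hx, hy, hz])

section lift

variable (x y z : H) (hx : x ^ 2 = 1) (hy : y ^ 2 = 1) (hz : z ^ 2 = 1)

@[simp] lemma lift_A : lift x y z hx hy hz A = x := toGroup.of _
@[simp] lemma lift_B : lift x y z hx hy hz B = y := toGroup.of _
@[simp] lemma lift_C : lift x y z hx hy hz C = z := toGroup.of _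

end lift

lemma hom_ext {φ ψ : G →* H} (hA : φ A = ψ A) (hB : φ B = ψ B) (hC : φ C = ψ C) :
    φ = ψ :=
  PresentedGroup.ext fun i => by fin_cases i <;> assumption

lemma closure_A_B_C : Subgroup.closure ({A, B, C} : Set G) = ⊤ := by
  have h : Set.range (PresentedGroup.of : Fin 3 → G) = {A, B, C} := by
    simp [Set.range, Fin.exists_fin_succ, A, B, C, Set.ext_iff, eq_comm]
  rw [← h, closure_range_of]

lemma closure_image_A_B_C {φ : G →* H} (hφ : Function.Surjective φ) :
    Subgroup.closure ({φ A, φ B, φ C} : Set H) = ⊤ := by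
  rw [← Subgroup.map_top_of_surjective φ hφ, ← closure_A_B_C, MonoidHom.map_closure,
    Set.image_insert_eq, Set.image_insert_eq, Set.image_singleton]

def rotate : G ≃* G :=
  MonoidHom.toMulEquiv (lift B C (D * A * D⁻¹) B_sq C_sq (conj_sq_eq_one D A_sq))
    (lift (D⁻¹ * C * D⁻¹⁻¹) A B (conj_sq_eq_one D⁻¹ C_sq) A_sq B_sq)
    (hom_ext (by simp) (by simp) (by simp [D]; group))
    (hom_ext (by simp [D]; group) (by simp) (by simp))

@[simp] lemma rotate_A : rotate A = B := by simp [rotate]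
@[simp] lemma rotate_B : rotate B = C := by simp [rotate]
@[simp] lemma rotate_C : rotate C = D * A * D⁻¹ := by simp [rotate]

lemma rotate_D : rotate D = D := by
  simp only [D, map_mul, rotate_A, rotate_B, rotate_C]
  group

lemma rotate_pow_three : rotate ^ 3 = MulAut.conj D :=
  MulEquiv.toMonoidHom_injective <| hom_ext (by simp [pow_succ]) (by simp [pow_succ, rotate_D])
    (by simp [pow_succ, rotate_D])

lemma rotate_zpow_three_mul (m : ℤ) : rotate ^ (3 * m) = MulAut.conj (D ^ m) := by
  rw [zpow_mul, zpow_ofNat, rotate_pow_three, map_zpow]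

lemma rotate_zpow_apply_D (j : ℤ) : (rotate ^ j) D = D :=
  (MulAction.stabilizer (MulAut G) D).zpow_mem (x := rotate) rotate_D j

end G

lemma eq_rotate_zpow_apply_A (P : ℤ → G)
    (hP0 : ∀ m : ℤ, P (3 * m) = D ^ m * A * (D ^ m)⁻¹)
    (hP1 : ∀ m : ℤ, P (3 * m + 1) = D ^ m * B * (D ^ m)⁻¹)
    (hP2 : ∀ m : ℤ, P (3 * m + 2) = D ^ m * C * (D ^ m)⁻¹) (j : ℤ) :
    P j = (G.rotate ^ j) A := by
  obtain ⟨m, r, hr, rfl⟩ : ∃ m r : ℤ, (r = 0 ∨ r = 1 ∨ r = 2) ∧ j = 3 * m + r :=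
    ⟨j / 3, j % 3, by omega, by omega⟩
  rcases hr with rfl | rfl | rfl
  · rw [add_zero, hP0, G.rotate_zpow_three_mul, MulAut.conj_apply]
  · rw [hP1, zpow_add_one, MulAut.mul_apply, G.rotate_A, G.rotate_zpow_three_mul,
      MulAut.conj_apply]
  · rw [hP2, zpow_add, MulAut.mul_apply, zpow_ofNat, pow_two, MulAut.mul_apply, G.rotate_A,
      G.rotate_B, G.rotate_zpow_three_mul, MulAut.conj_apply]

/-- Properties of the sequence of elliptic generators P. -/
theorem stmt2 (P : ℤ → G)
    (hP0 : ∀ m : ℤ, P (3 * m) = D ^ m * A * (D ^ m)⁻¹)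
    (hP1 : ∀ m : ℤ, P (3 * m + 1) = D ^ m * B * (D ^ m)⁻¹)
    (hP2 : ∀ m : ℤ, P (3 * m + 2) = D ^ m * C * (D ^ m)⁻¹)
    (j : ℤ) :
    P j ^ 2 = 1 ∧
    P (j + 2) * P (j + 1) * P j = D ∧
    Subgroup.closure {P j, P (j + 1), P (j + 2)} = ⊤ ∧
    ∃ φ : G →* G, (φ A = P j ∧ φ B = P (j + 1) ∧ φ C = P (j + 2)) ∧
      Function.Bijective φ := by
  have hP := eq_rotate_zpow_apply_A P hP0 hP1 hP2
  set φ := G.rotate ^ j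
  have hA : φ A = P j := (hP j).symm
  have hB : φ B = P (j + 1) := by
    rw [hP, zpow_add_one, MulAut.mul_apply, G.rotate_A]
  have hC : φ C = P (j + 2) := by
    rw [hP, zpow_add, zpow_ofNat, pow_two, MulAut.mul_apply, MulAut.mul_apply, G.rotate_A,
      G.rotate_B]
  refine ⟨?_, ?_, ?_, ⟨φ.toMonoidHom, ⟨hA, hB, hC⟩, φ.bijective⟩⟩
  · rw [← hA, ← map_pow, G.A_sq, map_one]
  · rw [← hA, ← hB, ← hC, ← map_mul, ← map_mul, ← D, G.rotate_zpow_apply_D]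
  · rw [← hA, ← hB, ← hC]
    exact G.closure_image_A_B_C (φ := φ.toMonoidHom) φ.surjective
end

section
/- For every j ∈ ℤ, (L ∘ R⁻¹)(P_j) = P_{j+1}; that is, the automorphism L ∘ R⁻¹ of G shifts the bi-infinite sequence P by one unit. -/
/-!
Write `ψ = L ∘ R⁻¹`. Inverting `R` on the generators gives `R⁻¹ A = A`, `R⁻¹ B = C` and
`R⁻¹ C = C·B·C`, so `ψ` sends `A ↦ B`, `B ↦ C` and `C ↦ D·A·D⁻¹`. Hence `ψ D = D`, so `ψ`
commutes with conjugation by `Dᵐ`, and it carries `P₃ₘ ↦ P₃ₘ₊₁ ↦ P₃ₘ₊₂ ↦ P₃ₘ₊₃`.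
-/

lemma mul_mul_cancel_left_of_mul_self {M : Type*} [Monoid M] {a : M} (ha : a * a = 1) (b : M) :
    a * (a * b) = b := by
  rw [← mul_assoc, ha, one_mul]

lemma of_mul_self (i : Fin 3) : (PresentedGroup.of i : G) * PresentedGroup.of i = 1 := by
  refine (QuotientGroup.eq_one_iff _).mpr (Subgroup.subset_normalClosure ?_)
  fin_cases i <;> simp [rels]

lemma A_mul_self : A * A = 1 := of_mul_self 0
lemma B_mul_self : B * B = 1 := of_mul_self 1
lemma C_mul_self : C * C = 1 := of_mul_self 2

lemma inv_A : A⁻¹ = A := inv_eq_of_mul_eq_one_right A_mul_self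
lemma inv_B : B⁻¹ = B := inv_eq_of_mul_eq_one_right B_mul_self
lemma inv_C : C⁻¹ = C := inv_eq_of_mul_eq_one_right C_mul_self

lemma D_mul_A_mul_D_inv : D * A * D⁻¹ = C * B * A * B * C := by
  simp only [D, mul_inv_rev, inv_A, inv_B, inv_C, mul_assoc]
  rw [← mul_assoc A A, A_mul_self, one_mul]

lemma map_D_of_map_generators {φ : G →* G} (hA : φ A = B) (hB : φ B = C)
    (hC : φ C = D * A * D⁻¹) : φ D = D := by
  rw [D, map_mul, map_mul, hA, hB, hC, D_mul_A_mul_D_inv]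
  simp only [mul_assoc, mul_mul_cancel_left_of_mul_self C_mul_self, B_mul_self, mul_one]

lemma map_conj_zpow_of_map_eq {H : Type*} [Group H] {φ : H →* H} {d : H} (hd : φ d = d)
    (m : ℤ) (x : H) : φ (d ^ m * x * (d ^ m)⁻¹) = d ^ m * φ x * (d ^ m)⁻¹ := by
  rw [map_mul, map_mul, map_inv, map_zpow, hd]

lemma map_shift_of_map_generators {φ : G →* G} (hA : φ A = B) (hB : φ B = C)
    (hC : φ C = D * A * D⁻¹) (P : ℤ → G)
    (hP0 : ∀ m : ℤ, P (3 * m) = D ^ m * A * (D ^ m)⁻¹)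
    (hP1 : ∀ m : ℤ, P (3 * m + 1) = D ^ m * B * (D ^ m)⁻¹)
    (hP2 : ∀ m : ℤ, P (3 * m + 2) = D ^ m * C * (D ^ m)⁻¹) (j : ℤ) :
    φ (P j) = P (j + 1) := by
  have hconj := map_conj_zpow_of_map_eq (map_D_of_map_generators hA hB hC)
  obtain ⟨m, rfl | rfl | rfl⟩ : ∃ m, j = 3 * m ∨ j = 3 * m + 1 ∨ j = 3 * m + 2 :=
    ⟨j / 3, by omega⟩
  · rw [hP0, hconj, hA, hP1]
  · rw [hP1, hconj, hB, show 3 * m + 1 + 1 = 3 * m + 2 by ring, hP2]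
  · rw [hP2, hconj, hC, show 3 * m + 2 + 1 = 3 * (m + 1) by ring, hP0, zpow_add_one]
    simp only [mul_inv_rev, mul_assoc]

section

variable {R : MulAut G}

lemma inv_apply_A (hRA : R A = A) : R⁻¹ A = A :=
  R.injective (by rw [MulAut.apply_inv_self, hRA])

lemma inv_apply_B (hRC : R C = B) : R⁻¹ B = C :=
  R.injective (by rw [MulAut.apply_inv_self, hRC])

lemma inv_apply_C (hRB : R B = B * C * B⁻¹) (hRC : R C = B) : R⁻¹ C = C * B * C := by
  apply R.injective
  rw [MulAut.apply_inv_self, map_mul, map_mul, hRC, hRB, inv_B]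
  simp only [mul_assoc, mul_mul_cancel_left_of_mul_self B_mul_self, B_mul_self, mul_one]

end

/-- The automorphism L ∘ R⁻¹ shifts the bi-infinite sequence P by one unit. -/
theorem stmt5 (R L : MulAut G)
    (hRA : R A = A) (hRB : R B = B * C * B⁻¹) (hRC : R C = B)
    (hLA : L A = B) (hLB : L B = B * A * B⁻¹) (hLC : L C = C)
    (P : ℤ → G)
    (hP0 : ∀ m : ℤ, P (3 * m) = D ^ m * A * (D ^ m)⁻¹)
    (hP1 : ∀ m : ℤ, P (3 * m + 1) = D ^ m * B * (D ^ m)⁻¹)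
    (hP2 : ∀ m : ℤ, P (3 * m + 2) = D ^ m * C * (D ^ m)⁻¹) :
    ∀ j : ℤ, L (R⁻¹ (P j)) = P (j + 1) := by
  have hA : L (R⁻¹ A) = B := by rw [inv_apply_A hRA, hLA]
  have hB : L (R⁻¹ B) = C := by rw [inv_apply_B hRC, hLC]
  have hC : L (R⁻¹ C) = D * A * D⁻¹ := by
    rw [inv_apply_C hRB hRC, map_mul, map_mul, hLC, hLB, inv_B, D_mul_A_mul_D_inv]
    simp only [mul_assoc]
  exact map_shift_of_map_generators (φ := (L * R⁻¹).toMonoidHom) hA hB hC P hP0 hP1 hP2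
end

section
/- The cube of the automorphism L ∘ R⁻¹ of G equals the inner automorphism g ↦ D·g·D⁻¹ given by conjugation by the distinguished element D. -/
theorem mulAut_ext {f g : MulAut G} (hA : f A = g A) (hB : f B = g B) (hC : f C = g C) :
    f = g :=
  MulEquiv.toMonoidHom_injective <| PresentedGroup.ext fun i => by fin_cases i <;> assumption

namespace MulAut

variable {H : Type*} [Group H]

theorem commute_conj_of_apply_eq {φ : MulAut H} {d : H} (hd : φ d = d) :
    Commute φ (conj d) :=
  MulEquiv.ext fun x => by simp [mul_apply, hd]

theorem pow_apply_pow_apply_of_commute {φ ψ : MulAut H} (h : Commute φ ψ) {n : ℕ} {x : H}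
    (hx : (φ ^ n) x = ψ x) (k : ℕ) : (φ ^ n) ((φ ^ k) x) = ψ ((φ ^ k) x) := by
  rw [← mul_apply, ← pow_mul_comm, mul_apply, hx, ← mul_apply, (h.pow_left k).eq, mul_apply]

end MulAut

open MulAut

theorem pow_three_eq_conj_D_of_cycle {φ : MulAut G} (hA : φ A = B) (hB : φ B = C)
    (hC : φ C = conj D A) : φ ^ 3 = conj D := by
  have hD : φ D = D := by
    show φ (C * B * A) = C * B * A
    rw [map_mul, map_mul, hA, hB, hC, conj_apply, D]
    group
  have hA3 : (φ ^ 3) A = conj D A := by simp [pow_succ, mul_apply, hA, hB, hC]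
  have h := pow_apply_pow_apply_of_commute (commute_conj_of_apply_eq hD) hA3
  exact mulAut_ext (h 0) (by simpa [hA] using h 1) (by simpa [pow_two, mul_apply, hA, hB] using h 2)

/-- The cube of L ∘ R⁻¹ is the inner automorphism given by conjugation by D. -/
theorem stmt6 (R L : MulAut G)
    (hRA : R A = A) (hRB : R B = B * C * B⁻¹) (hRC : R C = B)
    (hLA : L A = B) (hLB : L B = B * A * B⁻¹) (hLC : L C = C) :
    (L * R⁻¹) ^ 3 = MulAut.conj D := by
  have hRinvA : R⁻¹ A = A := R.symm_apply_eq.mpr hRA.symm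
  have hRinvB : R⁻¹ B = C := R.symm_apply_eq.mpr hRC.symm
  have hRinvC : R⁻¹ C = C⁻¹ * B * C := R.symm_apply_eq.mpr (by
    rw [map_mul, map_mul, map_inv, hRB, hRC]
    group)
  apply pow_three_eq_conj_D_of_cycle
  · rw [mul_apply, hRinvA, hLA]
  · rw [mul_apply, hRinvB, hLC]
  · rw [mul_apply, hRinvC, map_mul, map_mul, map_inv, hLB, hLC, conj_apply, D]
    simp only [mul_inv_rev, inv_C]
    group
end

section
/- Every matrix φ ∈ SL(2,ℤ) with |trace(φ)| > 2 is conjugate in SL(2,ℤ) to a matrix of the form ε·R^{a₁}·L^{b₁}·R^{a₂}·L^{b₂}⋯R^{a_k}·L^{b_k}, where ε ∈ {1, −1}, k ≥ 1, and a₁, b₁, a₂, b₂, …, a_k, b_k are positive integers. -/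
/-!
Conjugating by `R ^ n` or `L ^ n` fixes the trace and changes `a - d` by `2 n c` or `-2 n b`.
When the off-diagonal entries have opposite signs, `a d - b c = 1` and `a + d ≥ 3` force
`min (|b|, |c|) < |a - d|`, so `|a - d|` can be decreased until `b, c` have the same sign, and
then (conjugating by `S` if they are negative) `b, c > 0`; such a matrix has nonnegative entries.
A nonnegative matrix of `SL(2, ℤ)` is a word in `R` and `L`: subtract the smaller column from the
larger one until reaching the identity. Having `b, c > 0`, the word contains both letters, so one
of its cyclic rotations starts with `R` and ends with `L`. The case `tr φ ≤ -3` reduces to this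
one through `-φ`.
-/

def Rm : Matrix.SpecialLinearGroup (Fin 2) ℤ :=
  ⟨!![1, 1; 0, 1], by simp [Matrix.det_fin_two_of]⟩

def Lm : Matrix.SpecialLinearGroup (Fin 2) ℤ :=
  ⟨!![1, 0; 1, 1], by simp [Matrix.det_fin_two_of]⟩

open MatrixGroups Matrix.SpecialLinearGroup

lemma coe_Rm_zpow (n : ℤ) : ((Rm ^ n : SL(2, ℤ)) : Matrix (Fin 2) (Fin 2) ℤ) = !![1, n; 0, 1] :=
  ModularGroup.coe_T_zpow n

lemma coe_Lm_zpow (n : ℤ) : ((Lm ^ n : SL(2, ℤ)) : Matrix (Fin 2) (Fin 2) ℤ) = !![1, 0; n, 1] := by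
  induction n with
  | zero => simp [Matrix.one_fin_two]
  | succ n ih =>
    rw [zpow_add_one, coe_mul, ih]
    simp [Lm]
  | pred n ih =>
    rw [zpow_sub_one, coe_mul, ih, coe_inv]
    simp [Lm, Matrix.adjugate_fin_two, sub_eq_add_neg]

lemma coe_Rm_zpow_conj (n : ℤ) (A : SL(2, ℤ)) :
    ((Rm ^ n * A * (Rm ^ n)⁻¹ : SL(2, ℤ)) : Matrix (Fin 2) (Fin 2) ℤ) =
      !![A 0 0 + n * A 1 0, A 0 1 + n * (A 1 1 - A 0 0) - n ^ 2 * A 1 0;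
        A 1 0, A 1 1 - n * A 1 0] := by
  rw [← zpow_neg, coe_mul, coe_mul, coe_Rm_zpow, coe_Rm_zpow,
    Matrix.eta_fin_two (A : Matrix (Fin 2) (Fin 2) ℤ), Matrix.mul_fin_two, Matrix.mul_fin_two]
  congrm !![?_, ?_; ?_, ?_] <;> simp <;> ring

lemma coe_Lm_zpow_conj (n : ℤ) (A : SL(2, ℤ)) :
    ((Lm ^ n * A * (Lm ^ n)⁻¹ : SL(2, ℤ)) : Matrix (Fin 2) (Fin 2) ℤ) =
      !![A 0 0 - n * A 0 1, A 0 1;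
        A 1 0 + n * (A 0 0 - A 1 1) - n ^ 2 * A 0 1, A 1 1 + n * A 0 1] := by
  rw [← zpow_neg, coe_mul, coe_mul, coe_Lm_zpow, coe_Lm_zpow,
    Matrix.eta_fin_two (A : Matrix (Fin 2) (Fin 2) ℤ), Matrix.mul_fin_two, Matrix.mul_fin_two]
  congrm !![?_, ?_; ?_, ?_] <;> simp <;> ring

lemma coe_S_conj (A : SL(2, ℤ)) :
    ((ModularGroup.S * A * ModularGroup.S⁻¹ : SL(2, ℤ)) : Matrix (Fin 2) (Fin 2) ℤ) =
      !![A 1 1, -A 1 0; -A 0 1, A 0 0] := by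
  rw [coe_mul, coe_mul, coe_inv, ModularGroup.coe_S,
    Matrix.eta_fin_two (A : Matrix (Fin 2) (Fin 2) ℤ)]
  simp [Matrix.adjugate_fin_two]

lemma coe_mul_Rm_inv (A : SL(2, ℤ)) :
    ((A * Rm⁻¹ : SL(2, ℤ)) : Matrix (Fin 2) (Fin 2) ℤ) =
      !![A 0 0, A 0 1 - A 0 0; A 1 0, A 1 1 - A 1 0] := by
  rw [coe_mul, coe_inv, Matrix.eta_fin_two (A : Matrix (Fin 2) (Fin 2) ℤ)]
  simp [Rm, Matrix.adjugate_fin_two, sub_eq_add_neg, add_comm]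

lemma coe_mul_Lm_inv (A : SL(2, ℤ)) :
    ((A * Lm⁻¹ : SL(2, ℤ)) : Matrix (Fin 2) (Fin 2) ℤ) =
      !![A 0 0 - A 0 1, A 0 1; A 1 0 - A 1 1, A 1 1] := by
  rw [coe_mul, coe_inv, Matrix.eta_fin_two (A : Matrix (Fin 2) (Fin 2) ℤ)]
  simp [Lm, Matrix.adjugate_fin_two, sub_eq_add_neg]

lemma Matrix.SpecialLinearGroup.trace_coe_conj {n R : Type*} [Fintype n] [DecidableEq n]
    [CommRing R] (g A : SpecialLinearGroup n R) :
    Matrix.trace ((g * A * g⁻¹ : SpecialLinearGroup n R) : Matrix n n R) =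
      Matrix.trace (A : Matrix n n R) := by
  rw [coe_mul, coe_mul, Matrix.trace_mul_cycle, ← coe_mul, inv_mul_cancel, coe_one, one_mul]

lemma Matrix.SpecialLinearGroup.fin_two_det_eq_one {R : Type*} [CommRing R] (A : SL(2, R)) :
    A 0 0 * A 1 1 - A 0 1 * A 1 0 = 1 := by
  rw [← Matrix.det_fin_two]; exact A.det_coe

lemma conj_mul_conj {G : Type*} [Group G] (g h x : G) :
    (h * g) * x * (h * g)⁻¹ = h * (g * x * g⁻¹) * h⁻¹ := by
  group

lemma natAbs_lt_natAbs_sub_of_mul_neg {a b c d : ℤ} (hdet : a * d - b * c = 1) (ht : 3 ≤ a + d)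
    (hbc : b * c < 0) : c.natAbs < (a - d).natAbs ∨ b.natAbs < (a - d).natAbs := by
  by_contra! h
  have hprod : (a - d).natAbs * (a - d).natAbs ≤ (b * c).natAbs := by
    rw [Int.natAbs_mul]; exact Nat.mul_le_mul h.2 h.1
  zify at hprod
  rw [abs_mul_abs_self, abs_of_neg hbc] at hprod
  nlinarith

lemma exists_natAbs_add_two_mul_lt {δ c : ℤ} (hc : c ≠ 0) (h : c.natAbs < δ.natAbs) :
    ∃ n : ℤ, (δ + 2 * n * c).natAbs < δ.natAbs := by
  rcases lt_or_gt_of_ne hc with hc | hc <;> rcases le_or_gt δ 0 with hδ | hδ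
  exacts [⟨-1, by omega⟩, ⟨1, by omega⟩, ⟨1, by omega⟩, ⟨-1, by omega⟩]

lemma exists_conj_natAbs_diag_sub_lt (A : SL(2, ℤ))
    (ht : 3 ≤ Matrix.trace (A : Matrix (Fin 2) (Fin 2) ℤ)) (hbc : A 0 1 * A 1 0 < 0) :
    ∃ g : SL(2, ℤ), ((g * A * g⁻¹) 0 0 - (g * A * g⁻¹) 1 1).natAbs < (A 0 0 - A 1 1).natAbs := by
  rw [Matrix.trace_fin_two] at ht
  rcases natAbs_lt_natAbs_sub_of_mul_neg (fin_two_det_eq_one A) ht hbc with hc | hb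
  · obtain ⟨n, hn⟩ := exists_natAbs_add_two_mul_lt (right_ne_zero_of_mul hbc.ne) hc
    refine ⟨Rm ^ n, lt_of_eq_of_lt (congrArg Int.natAbs ?_) hn⟩
    rw [coe_Rm_zpow_conj]
    simp
    ring
  · obtain ⟨n, hn⟩ := exists_natAbs_add_two_mul_lt (δ := A 0 0 - A 1 1)
      (neg_ne_zero.mpr (left_ne_zero_of_mul hbc.ne)) (by rwa [Int.natAbs_neg])
    refine ⟨Lm ^ n, lt_of_eq_of_lt (congrArg Int.natAbs ?_) hn⟩
    rw [coe_Lm_zpow_conj]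
    simp
    ring

lemma exists_conj_offDiag_pos (A : SL(2, ℤ))
    (ht : 3 ≤ Matrix.trace (A : Matrix (Fin 2) (Fin 2) ℤ)) :
    ∃ g : SL(2, ℤ), 0 < (g * A * g⁻¹) 0 1 ∧ 0 < (g * A * g⁻¹) 1 0 := by
  induction hN : (A 0 0 - A 1 1).natAbs using Nat.strong_induction_on generalizing A with
  | _ N ih =>
  rcases lt_trichotomy (A 0 1 * A 1 0) 0 with hbc | hbc | hbc
  · obtain ⟨g, hg⟩ := exists_conj_natAbs_diag_sub_lt A ht hbc
    obtain ⟨h, hh⟩ := ih _ (hN ▸ hg) (g * A * g⁻¹) (by rwa [trace_coe_conj]) rfl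
    exact ⟨h * g, by rwa [conj_mul_conj]⟩
  · have had : A 0 0 * A 1 1 = 1 := by linarith [fin_two_det_eq_one A]
    rw [Matrix.trace_fin_two] at ht
    rcases Int.mul_eq_one_iff_eq_one_or_neg_one.mp had with h | h <;> omega
  · rcases pos_and_pos_or_neg_and_neg_of_mul_pos hbc with h | h
    · exact ⟨1, by simpa using h⟩
    · exact ⟨ModularGroup.S, by rw [coe_S_conj]; simp; omega⟩

lemma nonneg_det_eq_one_cases {a b c d : ℤ} (ha : 0 ≤ a) (hb : 0 ≤ b) (hc : 0 ≤ c) (hd : 0 ≤ d)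
    (hdet : a * d - b * c = 1) :
    (a = 1 ∧ b = 0 ∧ c = 0 ∧ d = 1) ∨ (b ≤ a ∧ d ≤ c ∧ 0 < b + d) ∨
      (a ≤ b ∧ c ≤ d ∧ 0 < a + c) := by
  have hbd : 0 < b + d := by nlinarith
  have hac : 0 < a + c := by nlinarith
  by_cases h₁ : b ≤ a ∧ d ≤ c
  · exact .inr (.inl ⟨h₁.1, h₁.2, hbd⟩)
  by_cases h₂ : a ≤ b ∧ c ≤ d
  · exact .inr (.inr ⟨h₂.1, h₂.2, hac⟩)
  left
  rcases lt_or_ge a b with hab | hab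
  · nlinarith [mul_le_mul hab.le (show d ≤ c by omega) hd hb]
  · have hcd : c + 1 ≤ d := by omega
    have hba : b + 1 ≤ a := by omega
    obtain ⟨rfl, rfl⟩ : b = 0 ∧ c = 0 := by
      constructor <;> nlinarith [mul_le_mul hba hcd (by omega) ha]
    rcases Int.mul_eq_one_iff_eq_one_or_neg_one.mp (by linarith : a * d = 1) with h | h <;> omega

lemma mem_closure_Rm_Lm_of_nonneg (A : SL(2, ℤ)) (hA : ∀ i j, 0 ≤ A i j) :
    A ∈ Submonoid.closure {Rm, Lm} := by
  induction hN : (A 0 0 + A 0 1 + A 1 0 + A 1 1).toNat using Nat.strong_induction_on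
    generalizing A with
  | _ N ih =>
  have of_mul_inv : ∀ X ∈ ({Rm, Lm} : Set SL(2, ℤ)), (∀ i j, 0 ≤ (A * X⁻¹) i j) →
      ((A * X⁻¹) 0 0 + (A * X⁻¹) 0 1 + (A * X⁻¹) 1 0 + (A * X⁻¹) 1 1).toNat < N →
      A ∈ Submonoid.closure {Rm, Lm} := fun X hX hpos hlt => by
    simpa using mul_mem (ih _ hlt _ hpos rfl) (Submonoid.subset_closure hX)
  have h₀₀ := hA 0 0
  have h₀₁ := hA 0 1
  have h₁₀ := hA 1 0
  have h₁₁ := hA 1 1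
  rcases nonneg_det_eq_one_cases h₀₀ h₀₁ h₁₀ h₁₁ (fin_two_det_eq_one A) with h | h | h
  · obtain rfl : A = 1 := by
      ext i j
      fin_cases i <;> fin_cases j <;> simp [h]
    exact one_mem _
  · refine of_mul_inv Lm (by simp) (fun i j => ?_) ?_
    · rw [coe_mul_Lm_inv]
      fin_cases i <;> fin_cases j <;> simp <;> omega
    · rw [coe_mul_Lm_inv]
      simp
      omega
  · refine of_mul_inv Rm (by simp) (fun i j => ?_) ?_
    · rw [coe_mul_Rm_inv]
      fin_cases i <;> fin_cases j <;> simp <;> omega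
    · rw [coe_mul_Rm_inv]
      simp
      omega

inductive IsBlockWord : SL(2, ℤ) → Prop
  | base {p q : ℕ} : 0 < p → 0 < q → IsBlockWord (Rm ^ p * Lm ^ q)
  | snoc {W : SL(2, ℤ)} {p q : ℕ} : IsBlockWord W → 0 < p → 0 < q →
      IsBlockWord (W * (Rm ^ p * Lm ^ q))

namespace IsBlockWord

variable {W : SL(2, ℤ)}

lemma mul_lpow (hW : IsBlockWord W) (q : ℕ) : IsBlockWord (W * Lm ^ q) := by
  induction hW with
  | base hp hq' => simpa [mul_assoc, ← pow_add] using base hp (Nat.add_pos_left hq' q)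
  | snoc hW hp hq' _ => simpa [mul_assoc, ← pow_add] using snoc hW hp (Nat.add_pos_left hq' q)

lemma mul_rpow_mul_lpow (hW : IsBlockWord W) (p : ℕ) {q : ℕ} (hq : 0 < q) :
    IsBlockWord (W * (Rm ^ p * Lm ^ q)) := by
  rcases Nat.eq_zero_or_pos p with rfl | hp
  · simpa using hW.mul_lpow q
  · exact hW.snoc hp hq

lemma rpow_mul (hW : IsBlockWord W) (p : ℕ) : IsBlockWord (Rm ^ p * W) := by
  induction hW with
  | base hp' hq => simpa [← mul_assoc, ← pow_add] using base (Nat.add_pos_right p hp') hq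
  | snoc _ hp' hq ih => simpa [← mul_assoc] using ih.snoc hp' hq

lemma exists_eq_prod (hW : IsBlockWord W) :
    ∃ (k : ℕ) (a b : ℕ → ℕ), 1 ≤ k ∧ (∀ i < k, 0 < a i ∧ 0 < b i) ∧
      W = ((List.range k).map fun i => Rm ^ a i * Lm ^ b i).prod := by
  induction hW with
  | @base p q hp hq => exact ⟨1, fun _ => p, fun _ => q, le_rfl, fun _ _ => ⟨hp, hq⟩, by simp⟩
  | @snoc W p q _ hp hq ih =>
    obtain ⟨k, a, b, hk, hab, rfl⟩ := ih
    refine ⟨k + 1, Function.update a k p, Function.update b k q, by omega, fun i hi => ?_, ?_⟩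
    · rcases (Nat.lt_succ_iff_lt_or_eq.mp hi) with hi | rfl
      · simpa [Function.update_of_ne hi.ne] using hab i hi
      · simp [hp, hq]
    · rw [List.prod_range_succ]
      congr 1
      · refine congrArg List.prod (List.map_congr_left fun i hi => ?_)
        have hi : i ≠ k := (List.mem_range.mp hi).ne
        simp [hi]
      · simp

end IsBlockWord

lemma exists_eq_lpow_mul_mul_rpow_of_mem_closure {x : SL(2, ℤ)}
    (hx : x ∈ Submonoid.closure {Rm, Lm}) :
    ∃ (m n : ℕ) (W : SL(2, ℤ)), (W = 1 ∨ IsBlockWord W) ∧ x = Lm ^ m * W * Rm ^ n := by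
  induction hx using Submonoid.closure_induction_right with
  | one => exact ⟨0, 0, 1, .inl rfl, by simp⟩
  | mul_right x _ y hy ih =>
    obtain ⟨m, n, W, hW, rfl⟩ := ih
    rcases hy with rfl | rfl
    · exact ⟨m, n + 1, W, hW, by rw [pow_succ, mul_assoc]⟩
    · rcases hW with rfl | hW
      · rcases Nat.eq_zero_or_pos n with rfl | hn
        · exact ⟨m + 1, 0, 1, .inl rfl, by simp [pow_succ]⟩
        · exact ⟨m, 0, Rm ^ n * Lm ^ 1, .inr (.base hn one_pos), by simp [mul_assoc]⟩
      · exact ⟨m, 0, W * (Rm ^ n * Lm ^ 1), .inr (hW.mul_rpow_mul_lpow n one_pos),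
          by simp [mul_assoc]⟩

lemma coe_Lm_pow_mul_Rm_pow (m n : ℕ) :
    ((Lm ^ m * Rm ^ n : SL(2, ℤ)) : Matrix (Fin 2) (Fin 2) ℤ) = !![1, (n : ℤ); m, m * n + 1] := by
  rw [coe_mul, ← zpow_natCast, ← zpow_natCast, coe_Lm_zpow, coe_Rm_zpow]
  simp

lemma exists_conj_isBlockWord_lpow_mul_mul_rpow {m n : ℕ} {W : SL(2, ℤ)}
    (hW : W = 1 ∨ IsBlockWord W)
    (hb : 0 < (Lm ^ m * W * Rm ^ n) 0 1) (hc : 0 < (Lm ^ m * W * Rm ^ n) 1 0) :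
    ∃ g : SL(2, ℤ), IsBlockWord (g * (Lm ^ m * W * Rm ^ n) * g⁻¹) := by
  have hcycle : (Lm ^ m)⁻¹ * (Lm ^ m * W * Rm ^ n) * (Lm ^ m)⁻¹⁻¹ = W * (Rm ^ n * Lm ^ m) := by
    group
  rcases hW with rfl | hW
  · rw [mul_one, coe_Lm_pow_mul_Rm_pow] at hb hc
    have hn : 0 < n := by simpa using hb
    have hm : 0 < m := by simpa using hc
    exact ⟨(Lm ^ m)⁻¹, by rw [hcycle, one_mul]; exact .base hn hm⟩
  · rcases Nat.eq_zero_or_pos m with rfl | hm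
    · exact ⟨Rm ^ n, by simpa [mul_assoc] using hW.rpow_mul n⟩
    · exact ⟨(Lm ^ m)⁻¹, by rw [hcycle]; exact hW.mul_rpow_mul_lpow n hm⟩

lemma exists_conj_isBlockWord (A : SL(2, ℤ))
    (ht : 3 ≤ Matrix.trace (A : Matrix (Fin 2) (Fin 2) ℤ)) :
    ∃ g : SL(2, ℤ), IsBlockWord (g * A * g⁻¹) := by
  obtain ⟨g, hb, hc⟩ := exists_conj_offDiag_pos A ht
  set B := g * A * g⁻¹ with hB
  rw [← trace_coe_conj g, Matrix.trace_fin_two] at ht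
  have hdet := fin_two_det_eq_one B
  -- `a d = 1 + b c > 0` and `a + d ≥ 3` force `a, d > 0`
  have hnonneg : ∀ i j, 0 ≤ B i j := by
    intro i j
    fin_cases i <;> fin_cases j <;> simp <;> nlinarith
  obtain ⟨m, n, W, hW, hBW⟩ :=
    exists_eq_lpow_mul_mul_rpow_of_mem_closure (mem_closure_Rm_Lm_of_nonneg B hnonneg)
  rw [hBW] at hb hc
  obtain ⟨h, hh⟩ := exists_conj_isBlockWord_lpow_mul_mul_rpow hW hb hc
  exact ⟨h * g, by rwa [conj_mul_conj, ← hB, hBW]⟩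

/-- Every φ ∈ SL(2,ℤ) with |trace φ| > 2 is conjugate in SL(2,ℤ) to
ε·R^{a₁}·L^{b₁}⋯R^{a_k}·L^{b_k} with ε = ±1, k ≥ 1 and all aᵢ, bᵢ positive. -/
theorem stmt7 (φ : Matrix.SpecialLinearGroup (Fin 2) ℤ)
    (hφ : 2 < |Matrix.trace (φ : Matrix (Fin 2) (Fin 2) ℤ)|) :
    ∃ (g : Matrix.SpecialLinearGroup (Fin 2) ℤ) (e : ℤ) (k : ℕ) (a b : ℕ → ℕ),
      (e = 1 ∨ e = -1) ∧ 1 ≤ k ∧ (∀ i < k, 0 < a i ∧ 0 < b i) ∧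
      ((g * φ * g⁻¹ : Matrix.SpecialLinearGroup (Fin 2) ℤ) : Matrix (Fin 2) (Fin 2) ℤ) =
        e • ((((List.range k).map fun i => Rm ^ a i * Lm ^ b i).prod :
          Matrix.SpecialLinearGroup (Fin 2) ℤ) : Matrix (Fin 2) (Fin 2) ℤ) := by
  rcases lt_abs.mp hφ with h | h
  · obtain ⟨g, hg⟩ := exists_conj_isBlockWord φ (by omega)
    obtain ⟨k, a, b, hk, hab, hW⟩ := hg.exists_eq_prod
    exact ⟨g, 1, k, a, b, .inl rfl, hk, hab, by rw [hW, one_smul]⟩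
  · obtain ⟨g, hg⟩ := exists_conj_isBlockWord (-φ) (by rw [coe_neg, Matrix.trace_neg]; omega)
    obtain ⟨k, a, b, hk, hab, hW⟩ := hg.exists_eq_prod
    exact ⟨g, -1, k, a, b, .inr rfl, hk, hab, by rw [← hW]; simp⟩
end

section
/- Suppose f_n = R. Then P_{2m,n} = P_{2m+1,n₊}. Moreover, for (m',n') ∈ ℤ², Q_{m',n'} equals this element if and only if (m',n') belongs to the set {(3m+1, n)} ∪ {(3m+2, k) | n+1 ≤ k ≤ n₊}. -/
/-!
Encode `A, B, C` as the letters `0, 1, 2`. Every element of `G` has a unique reduced word (no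
letter twice in a row), and `D^t B D^{-t}` has the reduced word `1` if `t = 0` and otherwise one
beginning with `210` or `012`. Since `R` and `L` fix `D`, so does every `F_k`, and with
`σ_k = F_{n-1}⁻¹ F_k` the equation `Q_{m',n'} = P_{2m,n}` says `σ_{n'-1}(X) = D^t B D^{-t}` for
the generator `X` of `P_{m'}` and some `t`.

The reduced words of `σ_k A, σ_k B, σ_k C` are palindromes, and each step `k ↦ k ± 1` replaces
one of them by a conjugate `p q p` in which `q` is either a prefix of `p` or meets it without
cancellation, so the new word extends `p`. For `k ≥ n` this keeps `σ_k B` beginning with `1` and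
of length at least `3`, `σ_k A` equal to `0` or such a word, and `σ_k C` equal to `1` exactly until
the next `R`, at `k = n₊`. For `k ≤ n - 2` it keeps `σ_k A` beginning with `0` but not `012`,
`σ_k C` beginning with `2` but not `210`, and `σ_k B` a prefix of one of them. So the only solutions
are `σ_{n-1} B = B` and `σ_k C = B` for `n ≤ k < n₊`; the latter at `k = n₊ - 1`, together with
`R (C B C⁻¹) = C`, is the identity `P_{2m,n} = P_{2m+1,n₊}`.
-/

namespace UniversalCoxeter

lemma head?_eq_of_prefix {α : Type*} {l l' : List α} (h : l' <+: l) (hl' : l' ≠ []) :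
    l.head? = l'.head? := by
  obtain ⟨r, rfl⟩ := h
  exact List.head?_append_of_ne_nil l' hl'

lemma getLast?_eq_head?_of_palindrome {α : Type*} {l : List α} (h : l.reverse = l) :
    l.getLast? = l.head? := by
  rw [← List.getLast?_reverse, h]

lemma inv_apply_of_apply {H : Type*} [Group H] {τ : MulAut H} {g g' : H} (h : τ g = g') :
    τ⁻¹ g' = g := by
  rw [← h, MulAut.inv_apply_self]

lemma apply_eq_self_of_forall {H : Type*} [Group H] {F f : ℤ → MulAut H} {g : H} (hF0 : F 0 = 1)
    (hF : ∀ k, F k = F (k - 1) * f k) (hf : ∀ k, f k g = g) (k : ℤ) : F k g = g := by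
  induction k using Int.induction_on with
  | zero => rw [hF0, MulAut.one_apply]
  | succ i ih => rw [hF, add_sub_cancel_right, MulAut.mul_apply, hf, ih]
  | pred i ih =>
    calc F (-i - 1) g = F (-i - 1) (f (-i) g) := by rw [hf]
      _ = g := by rw [← MulAut.mul_apply, ← hF, ih]

lemma conj_zpow_apply_eq_iff {H : Type*} [Group H] {τ : MulAut H} {d : H} (hτ : τ d = d)
    (q m : ℤ) (X Y : H) :
    d ^ q * τ X * (d ^ q)⁻¹ = d ^ m * τ Y * (d ^ m)⁻¹ ↔ X = d ^ (m - q) * Y * (d ^ (m - q))⁻¹ := by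
  have h : τ (d ^ (m - q) * Y * (d ^ (m - q))⁻¹) =
      (d ^ q)⁻¹ * (d ^ m * τ Y * (d ^ m)⁻¹) * d ^ q := by
    rw [map_mul, map_mul, map_inv, map_zpow, hτ]
    group
  refine Iff.trans ?_ τ.injective.eq_iff
  rw [h]
  constructor <;> intro h' <;> [rw [← h']; rw [h']] <;> group

lemma of_mul_self (i : Fin 3) : (PresentedGroup.of i : G) * PresentedGroup.of i = 1 := by
  have h : FreeGroup.of i * FreeGroup.of i ∈ Subgroup.normalClosure rels :=
    Subgroup.subset_normalClosure (by fin_cases i <;> simp [rels])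
  exact (QuotientGroup.eq_one_iff _).mpr h

lemma of_inv (i : Fin 3) : (PresentedGroup.of i : G)⁻¹ = PresentedGroup.of i :=
  inv_eq_of_mul_eq_one_right (of_mul_self i)

def ofWord (l : List (Fin 3)) : G := (l.map fun i => (PresentedGroup.of i : G)).prod

@[simp] lemma ofWord_nil : ofWord [] = 1 := rfl

@[simp] lemma ofWord_cons (i : Fin 3) (l : List (Fin 3)) :
    ofWord (i :: l) = PresentedGroup.of i * ofWord l := by
  simp [ofWord]

@[simp] lemma ofWord_append (l l' : List (Fin 3)) : ofWord (l ++ l') = ofWord l * ofWord l' := by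
  simp [ofWord]

lemma ofWord_reverse (l : List (Fin 3)) : ofWord l.reverse = (ofWord l)⁻¹ := by
  induction l with
  | nil => simp
  | cons i l ih => simp [ih, of_inv]

lemma ofWord_inv_of_palindrome {l : List (Fin 3)} (h : l.reverse = l) :
    (ofWord l)⁻¹ = ofWord l := by
  rw [← ofWord_reverse, h]

lemma A_eq : A = ofWord [0] := by simp [A]
lemma B_eq : B = ofWord [1] := by simp [B]
lemma C_eq : C = ofWord [2] := by simp [C]
lemma D_eq : D = ofWord [2, 1, 0] := by simp [D, A, B, C, mul_assoc]

abbrev IsReduced (l : List (Fin 3)) : Prop := l.IsChain (· ≠ ·)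

def push (i : Fin 3) : {l : List (Fin 3) // IsReduced l} → {l : List (Fin 3) // IsReduced l}
  | ⟨[], _⟩ => ⟨[i], List.isChain_singleton i⟩
  | ⟨j :: t, h⟩ => if hij : i = j then ⟨t, h.tail⟩ else ⟨i :: j :: t, h.cons_cons hij⟩

lemma push_push (i : Fin 3) (s : {l : List (Fin 3) // IsReduced l}) : push i (push i s) = s := by
  obtain ⟨_ | ⟨j, _ | ⟨k, t⟩⟩, h⟩ := s
  · simp [push]
  · by_cases hij : i = j
    · subst hij; simp [push]
    · simp [push, hij]
  · by_cases hij : i = j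
    · subst hij
      have hik : i ≠ k := (List.isChain_cons_cons.mp h).1
      simp [push, hik]
    · simp [push, hij]

def pushPerm (i : Fin 3) : Equiv.Perm {l : List (Fin 3) // IsReduced l} :=
  ⟨push i, push i, push_push i, push_push i⟩

def reduce : G →* Equiv.Perm {l : List (Fin 3) // IsReduced l} :=
  PresentedGroup.toGroup (f := pushPerm) <| by
    rintro r (rfl | rfl | rfl) <;> ext s <;> simp [pushPerm, push_push]

lemma reduce_ofWord {l : List (Fin 3)} (hl : IsReduced l) :
    reduce (ofWord l) ⟨[], .nil⟩ = ⟨l, hl⟩ := by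
  induction l with
  | nil => rfl
  | cons i l ih =>
    rw [ofWord_cons, map_mul, Equiv.Perm.mul_apply, ih hl.tail, reduce, PresentedGroup.toGroup.of]
    rcases l with _ | ⟨j, t⟩
    · rfl
    · simp [pushPerm, push, (List.isChain_cons_cons.mp hl).1]

lemma eq_of_ofWord_eq {l l' : List (Fin 3)} (hl : IsReduced l) (hl' : IsReduced l')
    (h : ofWord l = ofWord l') : l = l' := by
  simpa [reduce_ofWord hl, reduce_ofWord hl'] using congrArg (fun g => reduce g ⟨[], .nil⟩) h

section Palindromes

variable {p q s : List (Fin 3)}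

lemma IsReduced.append (hp : IsReduced p) (hq : IsReduced q) (h : p.getLast? ≠ q.head?) :
    IsReduced (p ++ q) :=
  List.isChain_append.mpr ⟨hp, hq, by rintro x hx y hy rfl; exact h (by rw [hx, hy])⟩

lemma eq_singleton_of_length_lt_three (hp : IsReduced p) (hpp : p.reverse = p) (hp0 : p ≠ [])
    (hlen : p.length < 3) : ∃ a, p = [a] := by
  match p, hp, hpp, hp0, hlen with
  | [a], _, _, _, _ => exact ⟨a, rfl⟩
  | [a, b], hp, hpp, _, _ =>
    simp only [List.reverse_cons, List.reverse_nil, List.nil_append, List.cons_append,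
      List.cons.injEq, and_true] at hpp
    exact absurd hpp.2 (List.isChain_pair.mp hp)

/-- As `p = s.reverse ++ q`, the word `p ++ q ++ p` collapses to `s.reverse ++ q ++ s`. -/
lemma conj_prefix (hp : IsReduced p) (hpp : p.reverse = p) (hqq : q.reverse = q) (hq0 : q ≠ [])
    (hps : p = q ++ s) :
    ofWord p * ofWord q * ofWord p = ofWord (p ++ s) ∧ IsReduced (p ++ s) ∧
      (p ++ s).reverse = p ++ s := by
  have hsp : p = s.reverse ++ q := by rw [← hpp, hps, List.reverse_append, hqq]
  have hps' : p ++ s = s.reverse ++ p := by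
    nth_rewrite 1 [hsp]; rw [List.append_assoc, ← hps]
  have hq2 : ∀ x, ofWord q * (ofWord q * x) = x := fun x => by
    nth_rewrite 1 [← ofWord_inv_of_palindrome hqq]; exact inv_mul_cancel_left _ x
  refine ⟨?_, ?_, by rw [List.reverse_append, hpp, hps']⟩
  · have h1 : ofWord p = ofWord s.reverse * ofWord q := by rw [hsp, ofWord_append]
    have h2 : ofWord p = ofWord q * ofWord s := by rw [hps, ofWord_append]
    nth_rewrite 1 [h1]
    rw [hps', ofWord_append, h2]
    simp only [mul_assoc, hq2]
  · obtain ⟨hs, -, hjoin⟩ := List.isChain_append.mp (hsp ▸ hp)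
    rw [hps']
    refine List.isChain_append.mpr ⟨hs, hp, fun x hx y hy => hjoin x hx y ?_⟩
    rwa [hps, List.head?_append_of_ne_nil _ hq0] at hy

lemma conj_append (hp : IsReduced p) (hpp : p.reverse = p) (hq : IsReduced q) (hqq : q.reverse = q)
    (hq0 : q ≠ []) (h : p.head? ≠ q.head?) :
    ofWord p * ofWord q * ofWord p = ofWord (p ++ q ++ p) ∧ IsReduced (p ++ q ++ p) ∧
      (p ++ q ++ p).reverse = p ++ q ++ p := by
  refine ⟨by simp [mul_assoc], ?_, by simp [hpp, hqq]⟩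
  refine (hp.append hq ?_).append hp ?_
  · rwa [getLast?_eq_head?_of_palindrome hpp]
  · rw [List.getLast?_append_of_ne_nil _ hq0, getLast?_eq_head?_of_palindrome hqq]
    exact Ne.symm h

lemma exists_conj (hp : IsReduced p) (hpp : p.reverse = p) (hq : IsReduced q)
    (hqq : q.reverse = q) (hq0 : q ≠ []) (h : q <+: p ∨ p.head? ≠ q.head?) :
    ∃ r, ofWord p * ofWord q * ofWord p = ofWord r ∧ IsReduced r ∧ r.reverse = r ∧ p <+: r := by
  rcases h with ⟨s, rfl⟩ | h
  · obtain ⟨e, r, rr⟩ := conj_prefix hp hpp hqq hq0 rfl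
    exact ⟨_, e, r, rr, List.prefix_append _ _⟩
  · obtain ⟨e, r, rr⟩ := conj_append hp hpp hq hqq hq0 h
    exact ⟨_, e, r, rr, List.append_assoc p q p ▸ List.prefix_append _ _⟩

end Palindromes

lemma exists_word_conj_pow {a b : Fin 3} (ha : a ≠ 1) (hb : b ≠ 1) (hab : a ≠ b) (j : ℕ) :
    ∃ l, IsReduced l ∧ ofWord l = ofWord [a, 1, b] ^ j * B * (ofWord [a, 1, b] ^ j)⁻¹ ∧
      (j = 0 ∧ l = [1] ∨ l.take 3 = [a, 1, b]) ∧ l ≠ [] ∧ l.head? ≠ some b ∧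
      l.getLast? ≠ some b := by
  induction j with
  | zero => exact ⟨[1], List.isChain_singleton _, by simp [B_eq], by simp, by simp,
      by simpa using hb.symm, by simpa using hb.symm⟩
  | succ j ih =>
    obtain ⟨l, hl, hlg, -, hl0, hhead, hlast⟩ := ih
    have hu : IsReduced [a, 1, b] := by simp [ha, hb.symm]
    have hu' : IsReduced [b, 1, a] := by simp [ha.symm, hb]
    refine ⟨[a, 1, b] ++ l ++ [b, 1, a], (hu.append hl ?_).append hu' ?_, ?_, by simp, by simp,
      by simp [hab], ?_⟩
    · simpa using hhead.symm
    · rw [List.getLast?_append_of_ne_nil _ hl0]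
      simpa using hlast
    · rw [ofWord_append, ofWord_append, hlg, show [b, 1, a] = [a, 1, b].reverse from rfl,
        ofWord_reverse, pow_succ']
      group
    · rw [List.getLast?_append_of_ne_nil _ (List.cons_ne_nil _ _)]
      simpa using hab

def dConjPrefixes : List (List (Fin 3)) := [[1], [2, 1, 0], [0, 1, 2]]

lemma exists_word_conj_D (t : ℤ) :
    ∃ l, IsReduced l ∧ ofWord l = D ^ t * B * (D ^ t)⁻¹ ∧ l.take 3 ∈ dConjPrefixes ∧
      (l = [1] → t = 0) := by
  have key : ∀ {a b : Fin 3} (j : ℕ) (l : List (Fin 3)), (j = 0 ∧ l = [1] ∨ l.take 3 = [a, 1, b]) →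
      [a, 1, b] ∈ dConjPrefixes → l.take 3 ∈ dConjPrefixes ∧ (l = [1] → j = 0) := by
    rintro a b j l (⟨rfl, rfl⟩ | h) hab
    · simp [dConjPrefixes]
    · exact ⟨h ▸ hab, by rintro rfl; simp at h⟩
  obtain ⟨j, rfl | rfl⟩ := Int.eq_nat_or_neg t
  · obtain ⟨l, hl, hlg, hcase, -⟩ := exists_word_conj_pow (a := 2) (b := 0) (by decide) (by decide)
      (by decide) j
    obtain ⟨hmem, hj⟩ := key j l hcase (by decide)
    exact ⟨l, hl, by rw [hlg, D_eq, zpow_natCast], hmem, fun h => by simp [hj h]⟩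
  · obtain ⟨l, hl, hlg, hcase, -⟩ := exists_word_conj_pow (a := 0) (b := 2) (by decide) (by decide)
      (by decide) j
    obtain ⟨hmem, hj⟩ := key j l hcase (by decide)
    refine ⟨l, hl, ?_, hmem, fun h => by simp [hj h]⟩
    have hDinv : D⁻¹ = ofWord [0, 1, 2] := by rw [D_eq, ← ofWord_reverse]; rfl
    rw [hlg, ← hDinv, zpow_neg, zpow_natCast, inv_pow]

lemma B_eq_conj_D_iff (t : ℤ) : B = D ^ t * B * (D ^ t)⁻¹ ↔ t = 0 := by
  refine ⟨fun e => ?_, by rintro rfl; simp⟩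
  obtain ⟨l, hl, hlg, -, ht⟩ := exists_word_conj_D t
  exact ht (eq_of_ofWord_eq hl (List.isChain_singleton _) (hlg.trans (e.symm.trans B_eq)))

def AvoidsDConj (l : List (Fin 3)) : Prop := IsReduced l ∧ l.take 3 ∉ dConjPrefixes

lemma AvoidsDConj.ofWord_ne {l : List (Fin 3)} (h : AvoidsDConj l) (t : ℤ) :
    ofWord l ≠ D ^ t * B * (D ^ t)⁻¹ := by
  obtain ⟨l', hl', hl'g, hmem, -⟩ := exists_word_conj_D t
  rintro e
  exact h.2 (eq_of_ofWord_eq h.1 hl' (e.trans hl'g.symm) ▸ hmem)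

lemma avoidsDConj_singleton {a : Fin 3} (ha : a ≠ 1) : AvoidsDConj [a] :=
  ⟨List.isChain_singleton a, by simpa [dConjPrefixes] using ha⟩

lemma avoidsDConj_of_head_eq_one {l : List (Fin 3)} (hl : IsReduced l) (h : l.head? = some 1)
    (hlen : 3 ≤ l.length) : AvoidsDConj l := by
  refine ⟨hl, ?_⟩
  match l, h, hlen with
  | 1 :: c :: d :: _, _, _ => simp [dConjPrefixes]

section Invariants

variable {a b : Fin 3} {x y z p q : List (Fin 3)}

def IsStub (a : Fin 3) (x y : List (Fin 3)) : Prop :=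
  x = [a] ∨ x.reverse = x ∧ x <+: y ∧ 3 ≤ x.length

lemma IsStub.mono (h : IsStub a x y) (hy : y <+: z) : IsStub a x z :=
  h.imp_right fun ⟨hx, hxy, hlen⟩ => ⟨hx, hxy.trans hy, hlen⟩

structure UpInv (x y z : List (Fin 3)) : Prop where
  reduced : IsReduced y
  palindrome : y.reverse = y
  head : y.head? = some 1
  three_le : 3 ≤ y.length
  stub_x : IsStub 0 x y
  stub_z : IsStub 1 z y

lemma UpInv.extend (h : UpInv x y z) (hy : y <+: p) (hp : IsReduced p) (hpp : p.reverse = p) :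
    UpInv x p y ∧ UpInv y p z := by
  have hy0 : y ≠ [] := List.ne_nil_of_length_pos (by have := h.three_le; omega)
  have hhead : p.head? = some 1 := (head?_eq_of_prefix hy hy0).trans h.head
  have hlen : 3 ≤ p.length := h.three_le.trans hy.length_le
  have hstub : ∀ {a}, IsStub a y p := Or.inr ⟨h.palindrome, hy, h.three_le⟩
  exact ⟨⟨hp, hpp, hhead, hlen, h.stub_x.mono hy, hstub⟩,
    ⟨hp, hpp, hhead, hlen, hstub, h.stub_z.mono hy⟩⟩

lemma IsStub.isPalindromicWord (h : IsStub a x y) (hy : IsReduced y) :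
    IsReduced x ∧ x.reverse = x ∧ x ≠ [] := by
  rcases h with rfl | ⟨hxx, hxy, hlen⟩
  · exact ⟨List.isChain_singleton _, rfl, List.cons_ne_nil _ _⟩
  · exact ⟨hy.prefix hxy, hxx, List.ne_nil_of_length_pos (by omega)⟩

lemma UpInv.exists_conj_z (h : UpInv x y z) :
    ∃ p, ofWord y * ofWord z * ofWord y = ofWord p ∧ UpInv x p y := by
  have hzy : z <+: y := by
    rcases h.stub_z with rfl | ⟨-, hzy, -⟩
    · exact List.singleton_prefix_iff_head?_eq_some.mpr h.head
    · exact hzy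
  obtain ⟨hz, hzz, hz0⟩ := h.stub_z.isPalindromicWord h.reduced
  obtain ⟨p, e, hp, hpp, hyp⟩ := exists_conj h.reduced h.palindrome hz hzz hz0 (Or.inl hzy)
  exact ⟨p, e, (h.extend hyp hp hpp).1⟩

lemma UpInv.exists_conj_x (h : UpInv x y z) :
    ∃ p, ofWord y * ofWord x * ofWord y = ofWord p ∧ UpInv y p z := by
  have hjoin : x <+: y ∨ y.head? ≠ x.head? := by
    rcases h.stub_x with rfl | ⟨-, hxy, -⟩
    · exact Or.inr (by simp [h.head])
    · exact Or.inl hxy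
  obtain ⟨hx, hxx, hx0⟩ := h.stub_x.isPalindromicWord h.reduced
  obtain ⟨p, e, hp, hpp, hyp⟩ := exists_conj h.reduced h.palindrome hx hxx hx0 hjoin
  exact ⟨p, e, (h.extend hyp hp hpp).2⟩

lemma UpInv.avoidsDConj (h : UpInv x y z) :
    AvoidsDConj x ∧ AvoidsDConj y ∧ (z ≠ [1] → AvoidsDConj z) := by
  have hlong : ∀ {w}, w <+: y → 3 ≤ w.length → AvoidsDConj w := fun hw hlen =>
    avoidsDConj_of_head_eq_one (h.reduced.prefix hw)
      ((head?_eq_of_prefix hw (List.ne_nil_of_length_pos (by omega))).symm.trans h.head) hlen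
  refine ⟨?_, hlong (List.prefix_refl y) h.three_le, fun hz => ?_⟩
  · rcases h.stub_x with rfl | ⟨-, hxy, hlen⟩
    · exact avoidsDConj_singleton (by decide)
    · exact hlong hxy hlen
  · rcases h.stub_z with rfl | ⟨-, hzy, hlen⟩
    · exact absurd rfl hz
    · exact hlong hzy hlen

def Lead (a b : Fin 3) (l : List (Fin 3)) : Prop := l.head? = some a ∧ l.take 3 ≠ [a, 1, b]

lemma Lead.ne_nil (h : Lead a b p) : p ≠ [] := by
  rintro rfl; simp [Lead] at h

lemma Lead.append (h : Lead a b p) (hp : 3 ≤ p.length) (s : List (Fin 3)) : Lead a b (p ++ s) :=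
  ⟨(List.head?_append_of_ne_nil p h.ne_nil).trans h.1,
    by rw [List.take_append_of_le_length hp]; exact h.2⟩

lemma Lead.of_prefix (h : Lead a b x) (hy : IsReduced y) (hyy : y.reverse = y) (hy0 : y ≠ [])
    (hyx : y <+: x) : Lead a b y := by
  have hhead : y.head? = some a := (head?_eq_of_prefix hyx hy0).symm.trans h.1
  by_cases hlen : 3 ≤ y.length
  · obtain ⟨s, rfl⟩ := hyx
    exact ⟨hhead, by simpa [List.take_append_of_le_length hlen] using h.2⟩
  · obtain ⟨c, rfl⟩ := eq_singleton_of_length_lt_three hy hyy hy0 (by omega)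
    exact ⟨hhead, by simp⟩

lemma Lead.avoidsDConj (h : Lead a b p) (hp : IsReduced p) (hab : a = 0 ∧ b = 2 ∨ a = 2 ∧ b = 0) :
    AvoidsDConj p := by
  refine ⟨hp, fun hmem => ?_⟩
  have hhead : (p.take 3).head? = some a := by rw [List.head?_take]; simp [h.1]
  simp only [dConjPrefixes, List.mem_cons, List.not_mem_nil, or_false] at hmem
  rcases hab with ⟨rfl, rfl⟩ | ⟨rfl, rfl⟩ <;> rcases hmem with e | e | e <;>
    first | exact h.2 e | (rw [e] at hhead; simp at hhead)

lemma exists_conj_of_lead (hp : IsReduced p) (hpp : p.reverse = p) (hl : Lead a b p)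
    (hq : IsReduced q) (hqq : q.reverse = q) (hq0 : q ≠ []) (hqp : q <+: p ∨ q.head? = some b)
    (hab : a ≠ b) (hb : b ≠ 1) :
    ∃ r, ofWord p * ofWord q * ofWord p = ofWord r ∧ IsReduced r ∧ r.reverse = r ∧ p <+: r ∧
      Lead a b r := by
  by_cases hlen : 3 ≤ p.length
  · have hjoin : q <+: p ∨ p.head? ≠ q.head? :=
      hqp.imp_right fun h => by rw [hl.1, h]; simpa using hab
    obtain ⟨r, e, hr, hrr, ⟨s, rfl⟩⟩ := exists_conj hp hpp hq hqq hq0 hjoin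
    exact ⟨_, e, hr, hrr, List.prefix_append _ _, hl.append hlen s⟩
  obtain ⟨c, rfl⟩ := eq_singleton_of_length_lt_three hp hpp hl.ne_nil (by omega)
  obtain rfl : c = a := by simpa using hl.1
  rcases hqp with hqp | hqb
  · obtain rfl : q = [c] := by
      rcases List.prefix_cons_iff.mp hqp with h | ⟨t, rfl, ht⟩
      · exact absurd h hq0
      · rw [List.prefix_nil.mp ht]
    exact ⟨[c], by simp [of_mul_self], hp, rfl, List.prefix_refl _, hl⟩
  · obtain ⟨e, hr, hrr⟩ := conj_append hp hpp hq hqq hq0 (by rw [hqb]; simpa using hab)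
    refine ⟨_, e, hr, hrr, List.append_assoc [c] q [c] ▸ List.prefix_append _ _, by simp, ?_⟩
    rcases q with _ | ⟨d, t⟩
    · exact absurd rfl hq0
    · obtain rfl : d = b := by simpa using hqb
      simp [hb]

structure DownInv (x y z : List (Fin 3)) : Prop where
  reduced_x : IsReduced x
  palindrome_x : x.reverse = x
  lead_x : Lead 0 2 x
  reduced_z : IsReduced z
  palindrome_z : z.reverse = z
  lead_z : Lead 2 0 z
  palindrome_y : y.reverse = y
  ne_nil_y : y ≠ []
  prefix_y : y <+: x ∨ y <+: z

lemma DownInv.reduced_y (h : DownInv x y z) : IsReduced y :=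
  h.prefix_y.elim h.reduced_x.prefix h.reduced_z.prefix

lemma DownInv.exists_conj_z (h : DownInv x y z) :
    ∃ r, ofWord z * ofWord y * ofWord z = ofWord r ∧ DownInv x z r := by
  have hjoin : y <+: z ∨ y.head? = some 0 :=
    h.prefix_y.symm.imp_right fun hyx => (head?_eq_of_prefix hyx h.ne_nil_y).symm.trans h.lead_x.1
  obtain ⟨r, e, hr, hrr, hzr, hlead⟩ := exists_conj_of_lead h.reduced_z h.palindrome_z h.lead_z
    h.reduced_y h.palindrome_y h.ne_nil_y hjoin (by decide) (by decide)
  exact ⟨r, e, h.reduced_x, h.palindrome_x, h.lead_x, hr, hrr, hlead, h.palindrome_z,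
    h.lead_z.ne_nil, Or.inr hzr⟩

lemma DownInv.exists_conj_x (h : DownInv x y z) :
    ∃ r, ofWord x * ofWord y * ofWord x = ofWord r ∧ DownInv r x z := by
  have hjoin : y <+: x ∨ y.head? = some 2 :=
    h.prefix_y.imp_right fun hyz => (head?_eq_of_prefix hyz h.ne_nil_y).symm.trans h.lead_z.1
  obtain ⟨r, e, hr, hrr, hxr, hlead⟩ := exists_conj_of_lead h.reduced_x h.palindrome_x h.lead_x
    h.reduced_y h.palindrome_y h.ne_nil_y hjoin (by decide) (by decide)
  exact ⟨r, e, hr, hrr, hlead, h.reduced_z, h.palindrome_z, h.lead_z, h.palindrome_x,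
    h.lead_x.ne_nil, Or.inl hxr⟩

lemma DownInv.avoidsDConj (h : DownInv x y z) :
    AvoidsDConj x ∧ AvoidsDConj y ∧ AvoidsDConj z := by
  have hx := h.lead_x.avoidsDConj h.reduced_x (by decide)
  have hz := h.lead_z.avoidsDConj h.reduced_z (by decide)
  refine ⟨hx, ?_, hz⟩
  rcases h.prefix_y with hyx | hyz
  · exact (h.lead_x.of_prefix h.reduced_y h.palindrome_y h.ne_nil_y hyx).avoidsDConj
      h.reduced_y (by decide)
  · exact (h.lead_z.of_prefix h.reduced_y h.palindrome_y h.ne_nil_y hyz).avoidsDConj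
      h.reduced_y (by decide)

end Invariants

structure IsRL (R L : MulAut G) : Prop where
  R_A : R A = A
  R_B : R B = B * C * B⁻¹
  R_C : R C = B
  L_A : L A = B
  L_B : L B = B * A * B⁻¹
  L_C : L C = C

section Realizes

variable {R L σ : MulAut G} {x y z w : List (Fin 3)}

lemma B_inv : B⁻¹ = B := of_inv 1

lemma B_mul_B : B * B = 1 := of_mul_self 1

lemma IsRL.R_D (h : IsRL R L) : R D = D := by
  rw [D, map_mul, map_mul, h.R_A, h.R_B, h.R_C, B_inv,
    show B * (B * C * B) * A = B * B * (C * B * A) by group, B_mul_B, one_mul]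

lemma IsRL.L_D (h : IsRL R L) : L D = D := by
  rw [D, map_mul, map_mul, h.L_A, h.L_B, h.L_C]
  group

lemma IsRL.R_conj_C (h : IsRL R L) : R (C * B * C⁻¹) = C := by
  rw [map_mul, map_mul, map_inv, h.R_C, h.R_B, B_inv,
    show B * (B * C * B) * B = B * B * C * (B * B) by group, B_mul_B, one_mul, mul_one]

lemma IsRL.L_conj_A (h : IsRL R L) : L (A * B * A⁻¹) = A := by
  rw [map_mul, map_mul, map_inv, h.L_A, h.L_B, B_inv,
    show B * (B * A * B) * B = B * B * A * (B * B) by group, B_mul_B, one_mul, mul_one]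

def Realizes (σ : MulAut G) (x y z : List (Fin 3)) : Prop :=
  σ A = ofWord x ∧ σ B = ofWord y ∧ σ C = ofWord z

lemma realizes_one : Realizes 1 [0] [1] [2] := ⟨A_eq, B_eq, C_eq⟩

lemma Realizes.mul_R (hRL : IsRL R L) (h : Realizes σ x y z) (hy : y.reverse = y)
    (e : ofWord y * ofWord z * ofWord y = ofWord w) : Realizes (σ * R) x w y := by
  obtain ⟨hx, hy', hz⟩ := h
  refine ⟨by rw [MulAut.mul_apply, hRL.R_A, hx], ?_, by rw [MulAut.mul_apply, hRL.R_C, hy']⟩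
  rw [MulAut.mul_apply, hRL.R_B, map_mul, map_mul, map_inv, hy', hz,
    ofWord_inv_of_palindrome hy, e]

lemma Realizes.mul_L (hRL : IsRL R L) (h : Realizes σ x y z) (hy : y.reverse = y)
    (e : ofWord y * ofWord x * ofWord y = ofWord w) : Realizes (σ * L) y w z := by
  obtain ⟨hx, hy', hz⟩ := h
  refine ⟨by rw [MulAut.mul_apply, hRL.L_A, hy'], ?_, by rw [MulAut.mul_apply, hRL.L_C, hz]⟩
  rw [MulAut.mul_apply, hRL.L_B, map_mul, map_mul, map_inv, hy', hx,
    ofWord_inv_of_palindrome hy, e]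

lemma Realizes.mul_inv_R (hRL : IsRL R L) (h : Realizes σ x y z) (hz : z.reverse = z)
    (e : ofWord z * ofWord y * ofWord z = ofWord w) : Realizes (σ * R⁻¹) x z w := by
  obtain ⟨hx, hy, hz'⟩ := h
  refine ⟨by rw [MulAut.mul_apply, inv_apply_of_apply hRL.R_A, hx],
    by rw [MulAut.mul_apply, inv_apply_of_apply hRL.R_C, hz'], ?_⟩
  rw [MulAut.mul_apply, inv_apply_of_apply hRL.R_conj_C, map_mul, map_mul, map_inv, hy, hz',
    ofWord_inv_of_palindrome hz, e]

lemma Realizes.mul_inv_L (hRL : IsRL R L) (h : Realizes σ x y z) (hx : x.reverse = x)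
    (e : ofWord x * ofWord y * ofWord x = ofWord w) : Realizes (σ * L⁻¹) w x z := by
  obtain ⟨hx', hy, hz⟩ := h
  refine ⟨?_, by rw [MulAut.mul_apply, inv_apply_of_apply hRL.L_A, hx'],
    by rw [MulAut.mul_apply, inv_apply_of_apply hRL.L_C, hz]⟩
  rw [MulAut.mul_apply, inv_apply_of_apply hRL.L_conj_A, map_mul, map_mul, map_inv, hy, hx',
    ofWord_inv_of_palindrome hx, e]

end Realizes

variable {R L : MulAut G} {f σ : ℤ → MulAut G} {n np : ℤ}

lemma exists_realizes_upInv (hRL : IsRL R L) (hfRL : ∀ k, f k = R ∨ f k = L)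
    (hσ : ∀ k, σ k = σ (k - 1) * f k) (hσn : σ (n - 1) = 1) (hfn : f n = R)
    (hnp : IsLeast {k | n < k ∧ f k = f n} np) :
    ∀ k, n ≤ k → ∃ x y z, Realizes (σ k) x y z ∧ UpInv x y z ∧ (z = [1] ↔ k < np) := by
  refine Int.leInduction ?_ fun k hk ⟨x, y, z, hr, h, hz⟩ => ?_
  · refine ⟨[0], [1, 2, 1], [1], ?_, ⟨by decide, rfl, rfl, le_rfl, Or.inl rfl, Or.inl rfl⟩,
      iff_of_true rfl hnp.1.1⟩
    rw [hσ, hσn, hfn, one_mul]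
    exact realizes_one.mul_R hRL rfl (by simp [mul_assoc])
  by_cases hR : f (k + 1) = R
  · obtain ⟨p, e, h'⟩ := h.exists_conj_z
    have hle : np ≤ k + 1 := hnp.2 ⟨by omega, by rw [hR, hfn]⟩
    refine ⟨x, p, y, ?_, h', iff_of_false ?_ (by omega)⟩
    · rw [hσ, add_sub_cancel_right, hR]
      exact hr.mul_R hRL h.palindrome e
    · rintro rfl
      exact absurd h.three_le (by decide)
  · obtain ⟨p, e, h'⟩ := h.exists_conj_x
    have hne : k + 1 ≠ np := fun hk' => hR (hk' ▸ hnp.1.2.trans hfn)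
    refine ⟨y, p, z, ?_, h', hz.trans (by omega)⟩
    rw [hσ, add_sub_cancel_right, (hfRL _).resolve_left hR]
    exact hr.mul_L hRL h.palindrome e

lemma exists_realizes_downInv (hRL : IsRL R L) (hfRL : ∀ k, f k = R ∨ f k = L)
    (hσ : ∀ k, σ k = σ (k - 1) * f k) (hσn : σ (n - 1) = 1) :
    ∀ k, k ≤ n - 2 → ∃ x y z, Realizes (σ k) x y z ∧ DownInv x y z := by
  have hdown : ∀ k, σ (k - 1) = σ k * (f k)⁻¹ := fun k => by rw [hσ k, mul_inv_cancel_right]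
  refine Int.leInductionDown ?_ fun k hk ⟨x, y, z, hr, h⟩ => ?_
  · rw [show n - 2 = n - 1 - 1 by ring, hdown, hσn, one_mul]
    rcases hfRL (n - 1) with hf | hf <;> rw [hf]
    · refine ⟨[0], [2], [2, 1, 2], realizes_one.mul_inv_R hRL rfl (by simp [mul_assoc]), ?_⟩
      exact ⟨by decide, rfl, ⟨rfl, by decide⟩, by decide, rfl, ⟨rfl, by decide⟩, rfl, by simp,
        Or.inr (by simp)⟩
    · refine ⟨[0, 1, 0], [0], [2], realizes_one.mul_inv_L hRL rfl (by simp [mul_assoc]), ?_⟩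
      exact ⟨by decide, rfl, ⟨rfl, by decide⟩, by decide, rfl, ⟨rfl, by decide⟩, rfl, by simp,
        Or.inl (by simp)⟩
  rw [hdown]
  rcases hfRL k with hf | hf <;> rw [hf]
  · obtain ⟨r, e, h'⟩ := h.exists_conj_z
    exact ⟨x, z, r, hr.mul_inv_R hRL h.palindrome_z e, h'⟩
  · obtain ⟨r, e, h'⟩ := h.exists_conj_x
    exact ⟨r, x, z, hr.mul_inv_L hRL h.palindrome_x e, h'⟩

lemma apply_eq_conj_D_iff (hRL : IsRL R L) (hfRL : ∀ k, f k = R ∨ f k = L)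
    (hσ : ∀ k, σ k = σ (k - 1) * f k) (hσn : σ (n - 1) = 1) (hfn : f n = R)
    (hnp : IsLeast {k | n < k ∧ f k = f n} np) (k t : ℤ) :
    σ k A ≠ D ^ t * B * (D ^ t)⁻¹ ∧
      (σ k B = D ^ t * B * (D ^ t)⁻¹ ↔ k = n - 1 ∧ t = 0) ∧
      (σ k C = D ^ t * B * (D ^ t)⁻¹ ↔ n ≤ k ∧ k < np ∧ t = 0) := by
  rcases lt_trichotomy k (n - 1) with hk | rfl | hk
  · obtain ⟨x, y, z, ⟨hx, hy, hz⟩, h⟩ := exists_realizes_downInv hRL hfRL hσ hσn k (by omega)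
    obtain ⟨ax, ay, az⟩ := h.avoidsDConj
    rw [hx, hy, hz]
    exact ⟨ax.ofWord_ne t, iff_of_false (ay.ofWord_ne t) (by omega),
      iff_of_false (az.ofWord_ne t) (by omega)⟩
  · rw [hσn, MulAut.one_apply, MulAut.one_apply, MulAut.one_apply, A_eq, C_eq,
      B_eq_conj_D_iff]
    exact ⟨(avoidsDConj_singleton (by decide)).ofWord_ne t, by simp,
      iff_of_false ((avoidsDConj_singleton (by decide)).ofWord_ne t) (by omega)⟩
  · obtain ⟨x, y, z, ⟨hx, hy, hz⟩, h, hz1⟩ :=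
      exists_realizes_upInv hRL hfRL hσ hσn hfn hnp k (by omega)
    obtain ⟨ax, ay, az⟩ := h.avoidsDConj
    rw [hx, hy, hz]
    refine ⟨ax.ofWord_ne t, iff_of_false (ay.ofWord_ne t) (by omega), ?_⟩
    by_cases hz' : z = [1]
    · rw [hz', ← B_eq, B_eq_conj_D_iff]
      have := hz1.mp hz'
      omega
    · rw [iff_of_false ((az hz').ofWord_ne t)]
      have := mt hz1.mpr hz'
      omega

end UniversalCoxeter

open UniversalCoxeter

theorem stmt15_general
    (R L : MulAut G)
    (hRA : R A = A) (hRB : R B = B * C * B⁻¹) (hRC : R C = B)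
    (hLA : L A = B) (hLB : L B = B * A * B⁻¹) (hLC : L C = C)
    (P : ℤ → G)
    (hP0 : ∀ m : ℤ, P (3 * m) = D ^ m * A * (D ^ m)⁻¹)
    (hP1 : ∀ m : ℤ, P (3 * m + 1) = D ^ m * B * (D ^ m)⁻¹)
    (hP2 : ∀ m : ℤ, P (3 * m + 2) = D ^ m * C * (D ^ m)⁻¹)
    (f : ℤ → MulAut G) (hfRL : ∀ n : ℤ, f n = R ∨ f n = L)
    (F : ℤ → MulAut G) (hF0 : F 0 = 1) (hF : ∀ n : ℤ, F n = F (n - 1) * f n)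
    (Q : ℤ → ℤ → G) (hQ : ∀ m n : ℤ, Q m n = F (n - 1) (P m))
    (PP : ℤ → ℤ → G)
    (hPPe : ∀ m n : ℤ, PP (2 * m) n = D ^ m * F (n - 1) B * (D ^ m)⁻¹)
    (hPPo : ∀ m n : ℤ, PP (2 * m + 1) n = D ^ m * F n (C * B * C⁻¹) * (D ^ m)⁻¹)
    (np : ℤ → ℤ) (hnp : ∀ n : ℤ, IsLeast {k : ℤ | n < k ∧ f k = f n} (np n)) :
    ∀ m n : ℤ, f n = R →
      PP (2 * m) n = PP (2 * m + 1) (np n) ∧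
      ∀ m' n' : ℤ, Q m' n' = PP (2 * m) n ↔
        ((m' = 3 * m + 1 ∧ n' = n) ∨ (m' = 3 * m + 2 ∧ n + 1 ≤ n' ∧ n' ≤ np n)) := by
  intro m n hfn
  have hRL : IsRL R L := ⟨hRA, hRB, hRC, hLA, hLB, hLC⟩
  have hFD : ∀ k, F k D = D := apply_eq_self_of_forall hF0 hF fun k => by
    rcases hfRL k with h | h <;> rw [h]
    exacts [hRL.R_D, hRL.L_D]
  set σ : ℤ → MulAut G := fun k => (F (n - 1))⁻¹ * F k
  have hFσ : ∀ k g, F k g = F (n - 1) (σ k g) := fun k g => by simp [σ]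
  have key := apply_eq_conj_D_iff hRL hfRL (σ := σ) (fun k => by simp only [σ, hF k, mul_assoc])
    (inv_mul_cancel _) hfn (hnp n)
  have hQ_iff : ∀ m' n' q X, P m' = D ^ q * X * (D ^ q)⁻¹ →
      (Q m' n' = PP (2 * m) n ↔ σ (n' - 1) X = D ^ (m - q) * B * (D ^ (m - q))⁻¹) := by
    intro m' n' q X hX
    rw [hQ, hPPe, hX, map_mul, map_mul, map_inv, map_zpow, hFD, hFσ (n' - 1) X,
      conj_zpow_apply_eq_iff (hFD _)]
  refine ⟨?_, fun m' n' => ?_⟩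
  · have hlt := (hnp n).1.1
    rw [hPPe, hPPo, hF (np n), MulAut.mul_apply, (hnp n).1.2, hfn, hRL.R_conj_C, hFσ (np n - 1),
      (key (np n - 1) 0).2.2.mpr ⟨by omega, by omega, rfl⟩]
    simp
  · obtain ⟨q, rfl | rfl | rfl⟩ : ∃ q, m' = 3 * q ∨ m' = 3 * q + 1 ∨ m' = 3 * q + 2 :=
      ⟨m' / 3, by omega⟩
    · rw [hQ_iff _ _ q A (hP0 q)]
      exact iff_of_false (key _ _).1 (by omega)
    · rw [hQ_iff _ _ q B (hP1 q), (key _ _).2.1]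
      omega
    · rw [hQ_iff _ _ q C (hP2 q), (key _ _).2.2]
      omega

/-- If f_n = R then P_{2m,n} = P_{2m+1,n₊}, and Q_{m',n'} equals this element exactly
for (m',n') in {(3m+1,n)} ∪ {(3m+2,k) | n+1 ≤ k ≤ n₊}. -/
theorem stmt15
    (R L : MulAut G)
    (hRA : R A = A) (hRB : R B = B * C * B⁻¹) (hRC : R C = B)
    (hLA : L A = B) (hLB : L B = B * A * B⁻¹) (hLC : L C = C)
    (P : ℤ → G)
    (hP0 : ∀ m : ℤ, P (3 * m) = D ^ m * A * (D ^ m)⁻¹)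
    (hP1 : ∀ m : ℤ, P (3 * m + 1) = D ^ m * B * (D ^ m)⁻¹)
    (hP2 : ∀ m : ℤ, P (3 * m + 2) = D ^ m * C * (D ^ m)⁻¹)
    (p : ℤ) (hp : 2 ≤ p)
    (f : ℤ → MulAut G) (hfRL : ∀ n : ℤ, f n = R ∨ f n = L)
    (hfper : ∀ n : ℤ, f (n + p) = f n) (hf0 : f 0 = L) (hf1 : f 1 = R)
    (F : ℤ → MulAut G) (hF0 : F 0 = 1) (hF : ∀ n : ℤ, F n = F (n - 1) * f n)
    (Q : ℤ → ℤ → G) (hQ : ∀ m n : ℤ, Q m n = F (n - 1) (P m))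
    (PP : ℤ → ℤ → G)
    (hPPe : ∀ m n : ℤ, PP (2 * m) n = D ^ m * F (n - 1) B * (D ^ m)⁻¹)
    (hPPo : ∀ m n : ℤ, PP (2 * m + 1) n = D ^ m * F n (C * B * C⁻¹) * (D ^ m)⁻¹)
    (np : ℤ → ℤ) (hnp : ∀ n : ℤ, IsLeast {k : ℤ | n < k ∧ f k = f n} (np n)) :
    ∀ m n : ℤ, f n = R →
      PP (2 * m) n = PP (2 * m + 1) (np n) ∧
      ∀ m' n' : ℤ, Q m' n' = PP (2 * m) n ↔
        ((m' = 3 * m + 1 ∧ n' = n) ∨ (m' = 3 * m + 2 ∧ n + 1 ≤ n' ∧ n' ≤ np n)) :=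
  stmt15_general R L hRA hRB hRC hLA hLB hLC P hP0 hP1 hP2 f hfRL F hF0 hF Q hQ PP hPPe hPPo np hnp
end

section
/- Suppose f_n = L. Then P_{2m,n} = P_{2m−1,n₊}. Moreover, for (m',n') ∈ ℤ², Q_{m',n'} equals this element if and only if (m',n') belongs to the set {(3m+1, n)} ∪ {(3m, k) | n+1 ≤ k ≤ n₊}. -/
lemma conj_zpow_eq_conj_zpow_iff {H : Type*} [Group H] {g x y : H} {q k : ℤ} :
    g ^ q * x * (g ^ q)⁻¹ = g ^ k * y * (g ^ k)⁻¹ ↔ x = g ^ (k - q) * y * (g ^ (k - q))⁻¹ := by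
  constructor
  · intro h
    calc x = (g ^ q)⁻¹ * (g ^ q * x * (g ^ q)⁻¹) * g ^ q := by group
      _ = _ := by rw [h]; group
  · rintro rfl
    group

lemma map_conj_zpow {H Φ : Type*} [Group H] [FunLike Φ H H] [MonoidHomClass Φ H H] (φ : Φ)
    {g : H} (hg : φ g = g) (q : ℤ) (x : H) :
    φ (g ^ q * x * (g ^ q)⁻¹) = g ^ q * φ x * (g ^ q)⁻¹ := by
  simp [map_zpow, hg]

section Cocycle

variable {M : Type*} [Mul M] {f F : ℤ → MulAut M}

lemma apply_eq_apply_sub_one (hF : ∀ n, F n = F (n - 1) * f n) (n : ℤ) (x : M) :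
    F n x = F (n - 1) (f n x) := by
  rw [hF n]
  rfl

theorem exists_apply_eq_apply_of_mapsTo (hF : ∀ n, F n = F (n - 1) * f n) {S : Set M}
    {a b : ℤ} (hab : a ≤ b) (hS : ∀ k, a < k → k ≤ b → Set.MapsTo (f k) S S) :
    ∀ x ∈ S, ∃ z ∈ S, F b x = F a z := by
  induction b, hab using Int.leInduction with
  | base => exact fun x hx => ⟨x, hx, rfl⟩
  | succ b hab ih =>
    intro x hx
    obtain ⟨z, hz, hxz⟩ :=
      ih (fun k hk hkb => hS k hk (by omega)) _ (hS (b + 1) (by omega) le_rfl hx)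
    exact ⟨z, hz, by rw [apply_eq_apply_sub_one hF, add_sub_cancel_right, hxz]⟩

theorem apply_eq_apply_of_fixed (hF : ∀ n, F n = F (n - 1) * f n) {x : M} {a b : ℤ} (hab : a ≤ b)
    (hfix : ∀ k, a < k → k ≤ b → f k x = x) : F b x = F a x := by
  obtain ⟨z, rfl, h⟩ := exists_apply_eq_apply_of_mapsTo hF (S := {x}) hab
    (fun k hk hkb y hy => by rw [hy, Set.mem_singleton_iff, hfix k hk hkb]) x rfl
  exact h

end Cocycle

/-- `N = n₊` for an `n` with `f n = L`. -/
structure IsLRun {M : Type*} [Mul M] (R L : MulAut M) (f : ℤ → MulAut M) (n N : ℤ) : Prop where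
  lt : n < N
  left_eq : f n = L
  right_eq : f N = L
  between_eq : ∀ k, n < k → k < N → f k = R

theorem IsLRun.apply_eq_of_fixed {M : Type*} [Mul M] {R L : MulAut M} {f F : ℤ → MulAut M}
    {n N : ℤ} (hrun : IsLRun R L f n N) (hF : ∀ n, F n = F (n - 1) * f n) {a b : M}
    (hRa : R a = a) (hLa : L a = b) {k : ℤ} (hnk : n ≤ k) (hkN : k < N) : F k a = F (n - 1) b := by
  rw [apply_eq_apply_of_fixed hF hnk fun j hj hjk => by rw [hrun.between_eq j hj (by omega), hRa],
    apply_eq_apply_sub_one hF, hrun.left_eq, hLa]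

namespace FreeProdZ2

def gen (i : Fin 3) : G := PresentedGroup.of i

@[simp] lemma gen_mul_self (i : Fin 3) : gen i * gen i = 1 :=
  PresentedGroup.one_of_mem (by fin_cases i <;> simp [rels])

@[simp] lemma gen_inv (i : Fin 3) : (gen i)⁻¹ = gen i :=
  inv_eq_of_mul_eq_one_right (gen_mul_self i)

@[simp] lemma gen_zero : gen 0 = A := rfl
@[simp] lemma gen_one : gen 1 = B := rfl
@[simp] lemma gen_two : gen 2 = C := rfl

@[simp] lemma A_inv : A⁻¹ = A := gen_inv 0
@[simp] lemma B_inv : B⁻¹ = B := gen_inv 1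
@[simp] lemma C_inv : C⁻¹ = C := gen_inv 2

def wordProd (w : List (Fin 3)) : G := (w.map gen).prod

@[simp] lemma wordProd_nil : wordProd [] = 1 := rfl

@[simp] lemma wordProd_cons (a : Fin 3) (w : List (Fin 3)) :
    wordProd (a :: w) = gen a * wordProd w := by
  simp [wordProd]

@[simp] lemma wordProd_append (u v : List (Fin 3)) :
    wordProd (u ++ v) = wordProd u * wordProd v := by
  simp [wordProd]

lemma wordProd_reverse (w : List (Fin 3)) : wordProd w.reverse = (wordProd w)⁻¹ := by
  induction w with
  | nil => simp
  | cons a w ih => simp [ih]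

lemma D_eq_wordProd : D = wordProd [2, 1, 0] := by
  simp [D, mul_assoc]

lemma D_inv_eq_wordProd : D⁻¹ = wordProd [0, 1, 2] := by
  rw [D_eq_wordProd, ← wordProd_reverse]
  rfl

abbrev IsReduced (w : List (Fin 3)) : Prop := w.IsChain (· ≠ ·)

def reduceCons (a : Fin 3) : List (Fin 3) → List (Fin 3)
  | [] => [a]
  | b :: t => if a = b then t else a :: b :: t

def reduce (w : List (Fin 3)) : List (Fin 3) := w.foldr reduceCons []

@[simp] lemma reduce_cons (a : Fin 3) (w : List (Fin 3)) :
    reduce (a :: w) = reduceCons a (reduce w) := rfl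

lemma reduce_append (u v : List (Fin 3)) : reduce (u ++ v) = u.foldr reduceCons (reduce v) := by
  simp [reduce, List.foldr_append]

lemma wordProd_reduceCons (a : Fin 3) (w : List (Fin 3)) :
    wordProd (reduceCons a w) = gen a * wordProd w := by
  cases w with
  | nil => simp [reduceCons]
  | cons b t =>
    by_cases h : a = b
    · subst h; simp [reduceCons, ← mul_assoc]
    · simp [reduceCons, h]

@[simp] lemma wordProd_reduce (w : List (Fin 3)) : wordProd (reduce w) = wordProd w := by
  induction w with
  | nil => rfl
  | cons a w ih => rw [reduce_cons, wordProd_reduceCons, ih, wordProd_cons]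

lemma isReduced_reduceCons {w : List (Fin 3)} (hw : IsReduced w) (a : Fin 3) :
    IsReduced (reduceCons a w) := by
  cases w with
  | nil => simp [reduceCons, IsReduced]
  | cons b t =>
    by_cases h : a = b
    · simpa [reduceCons, h] using hw.tail
    · simpa [reduceCons, h, IsReduced] using hw

lemma isReduced_reduce (w : List (Fin 3)) : IsReduced (reduce w) := by
  induction w with
  | nil => simp [reduce, IsReduced]
  | cons a w ih => exact isReduced_reduceCons ih a

lemma IsReduced.reduce_eq {w : List (Fin 3)} (hw : IsReduced w) : reduce w = w := by
  induction w with
  | nil => rfl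
  | cons a t ih =>
    rw [reduce_cons, ih hw.tail]
    cases t with
    | nil => rfl
    | cons b t => simp [reduceCons, (List.isChain_cons_cons.1 hw).1]

lemma reduceCons_reduceCons {w : List (Fin 3)} (hw : IsReduced w) (a : Fin 3) :
    reduceCons a (reduceCons a w) = w := by
  rcases w with _ | ⟨b, _ | ⟨c, t⟩⟩
  · simp [reduceCons]
  · by_cases h : a = b <;> simp [reduceCons, h]
  · by_cases h : a = b
    · subst h; simp [reduceCons, (List.isChain_cons_cons.1 hw).1]
    · simp [reduceCons, h]

abbrev ReducedWord : Type := {w : List (Fin 3) // IsReduced w}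

def reduceConsPerm (a : Fin 3) : Equiv.Perm ReducedWord :=
  Function.Involutive.toPerm (fun w => ⟨reduceCons a w.1, isReduced_reduceCons w.2 a⟩)
    fun w => Subtype.ext (reduceCons_reduceCons w.2 a)

def toPerm : G →* Equiv.Perm ReducedWord :=
  PresentedGroup.toGroup (f := reduceConsPerm) <| by
    rintro r (rfl | rfl | rfl) <;>
      exact Equiv.ext fun w => Subtype.ext (reduceCons_reduceCons w.2 _)

lemma toPerm_gen (a : Fin 3) : toPerm (gen a) = reduceConsPerm a :=
  PresentedGroup.toGroup.of _

lemma toPerm_wordProd (w : List (Fin 3)) :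
    (toPerm (wordProd w) ⟨[], .nil⟩).1 = reduce w := by
  induction w with
  | nil => rfl
  | cons a w ih =>
    rw [wordProd_cons, map_mul, Equiv.Perm.mul_apply, toPerm_gen, reduce_cons, ← ih]
    rfl

theorem wordProd_eq_wordProd_iff {u v : List (Fin 3)} :
    wordProd u = wordProd v ↔ reduce u = reduce v :=
  ⟨fun h => by rw [← toPerm_wordProd, ← toPerm_wordProd, h],
   fun h => by rw [← wordProd_reduce u, ← wordProd_reduce v, h]⟩

theorem IsReduced.eq_of_wordProd_eq {u v : List (Fin 3)} (hu : IsReduced u) (hv : IsReduced v)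
    (h : wordProd u = wordProd v) : u = v := by
  rwa [wordProd_eq_wordProd_iff, hu.reduce_eq, hv.reduce_eq] at h

lemma reduceCons_append (a : Fin 3) {u : List (Fin 3)} (hu : u ≠ []) (t : List (Fin 3)) :
    reduceCons a (u ++ t) = reduceCons a u ++ t := by
  obtain ⟨b, u, rfl⟩ := List.exists_cons_of_ne_nil hu
  by_cases h : a = b <;> simp [reduceCons, h]

lemma foldr_reduceCons_append {v u : List (Fin 3)} (h : ∀ l ∈ v.tails, l.foldr reduceCons u ≠ [])
    (t : List (Fin 3)) : v.foldr reduceCons (u ++ t) = v.foldr reduceCons u ++ t := by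
  induction v with
  | nil => rfl
  | cons a v ih =>
    simp only [List.tails_cons, List.mem_cons, forall_eq_or_imp] at h
    rw [List.foldr_cons, List.foldr_cons, ih h.2,
      reduceCons_append a (h.2 v ((List.mem_tails _ _).2 (List.suffix_refl v)))]

/-- Certifies that `pre a b` is a prefix of the reduced `σ`-image of every reduced word starting
with `a b`: the first clause is the base case of an induction on the word, the second the
inductive step, whose cancellations must stay inside `pre b c`. -/
def PrefixTable (σ : Fin 3 → List (Fin 3)) (pre : Fin 3 → Fin 3 → List (Fin 3)) : Prop :=
  (∀ a b, a ≠ b → pre a b <+: reduce (σ a ++ σ b)) ∧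
  ∀ a b c, a ≠ b → b ≠ c → pre a b <+: (σ a).foldr reduceCons (pre b c) ∧
    ∀ l ∈ (σ a).tails, l.foldr reduceCons (pre b c) ≠ []

theorem PrefixTable.prefix_reduce_flatMap {σ : Fin 3 → List (Fin 3)}
    {pre : Fin 3 → Fin 3 → List (Fin 3)} (h : PrefixTable σ pre) {a b : Fin 3} {t : List (Fin 3)}
    (hw : IsReduced (a :: b :: t)) : pre a b <+: reduce ((a :: b :: t).flatMap σ) := by
  induction t generalizing a b with
  | nil => simpa using h.1 a b (List.isChain_cons_cons.1 hw).1
  | cons c t ih =>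
    obtain ⟨hab, hw'⟩ := List.isChain_cons_cons.1 hw
    obtain ⟨s, hs⟩ := ih hw'
    obtain ⟨hpre, hne⟩ := h.2 a b c hab (List.isChain_cons_cons.1 hw').1
    rw [List.flatMap_cons, reduce_append, ← hs, foldr_reduceCons_append hne]
    exact hpre.trans (List.prefix_append _ _)

abbrev StartsWithB (w : List (Fin 3)) : Prop := 2 ≤ w.length ∧ w.head? = some 1

abbrev StartsWithAC (w : List (Fin 3)) : Prop := 2 ≤ w.length ∧ w.head? ≠ some 1

abbrev IsLetterOrStartsWithB (w : List (Fin 3)) : Prop := w.length = 1 ∨ StartsWithB w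

lemma StartsWithB.append {u : List (Fin 3)} (hu : StartsWithB u) (t : List (Fin 3)) :
    StartsWithB (u ++ t) := by
  obtain ⟨hlen, hhead⟩ := hu
  refine ⟨by simp; omega, ?_⟩
  rw [List.head?_append_of_ne_nil _ (List.ne_nil_of_length_pos (by omega)), hhead]

def HasReducedWord (P : List (Fin 3) → Prop) (x : G) : Prop :=
  ∃ w, IsReduced w ∧ P w ∧ wordProd w = x

lemma HasReducedWord.mono {P Q : List (Fin 3) → Prop} (hPQ : ∀ w, P w → Q w) {x : G}
    (hx : HasReducedWord P x) : HasReducedWord Q x :=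
  let ⟨w, hw, hP, hwx⟩ := hx
  ⟨w, hw, hPQ w hP, hwx⟩

lemma HasReducedWord.exists_and {P Q : List (Fin 3) → Prop} {x : G} (hP : HasReducedWord P x)
    (hQ : HasReducedWord Q x) : ∃ w, P w ∧ Q w := by
  obtain ⟨u, hu, hPu, rfl⟩ := hP
  obtain ⟨v, hv, hQv, hvu⟩ := hQ
  exact ⟨u, hPu, hv.eq_of_wordProd_eq hu hvu ▸ hQv⟩

section Substitution

variable {Φ : Type*} [FunLike Φ G G] [MonoidHomClass Φ G G] {φ : Φ} {σ : Fin 3 → List (Fin 3)}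

theorem map_wordProd (hφ : ∀ i, φ (gen i) = wordProd (σ i)) (w : List (Fin 3)) :
    φ (wordProd w) = wordProd (w.flatMap σ) := by
  induction w with
  | nil => simp
  | cons a w ih => simp [ih, hφ]

lemma map_wordProd_eq_wordProd (hφ : ∀ i, φ (gen i) = wordProd (σ i)) {u v : List (Fin 3)}
    (h : reduce (u.flatMap σ) = reduce v) : φ (wordProd u) = wordProd v := by
  rw [map_wordProd hφ, wordProd_eq_wordProd_iff, h]

theorem HasReducedWord.map_startsWithB (hφ : ∀ i, φ (gen i) = wordProd (σ i))
    {pre : Fin 3 → Fin 3 → List (Fin 3)} (ht : PrefixTable σ pre)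
    (hB : ∀ b, StartsWithB (pre 1 b)) {x : G} (hx : HasReducedWord StartsWithB x) :
    HasReducedWord StartsWithB (φ x) := by
  obtain ⟨_ | ⟨a, _ | ⟨b, t⟩⟩, hw, ⟨hlen, hhead⟩, rfl⟩ := hx
  · simp at hlen
  · simp at hlen
  obtain rfl : a = 1 := Option.some.inj hhead
  obtain ⟨s, hs⟩ := ht.prefix_reduce_flatMap hw
  exact ⟨_, isReduced_reduce _, hs ▸ (hB b).append s, by rw [wordProd_reduce, map_wordProd hφ]⟩

theorem HasReducedWord.map_letterOrStartsWithB (hφ : ∀ i, φ (gen i) = wordProd (σ i))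
    {pre : Fin 3 → Fin 3 → List (Fin 3)} (ht : PrefixTable σ pre)
    (hB : ∀ b, StartsWithB (pre 1 b)) (hσ : ∀ i, IsReduced (σ i) ∧ IsLetterOrStartsWithB (σ i))
    {x : G} (hx : HasReducedWord IsLetterOrStartsWithB x) :
    HasReducedWord IsLetterOrStartsWithB (φ x) := by
  obtain ⟨w, hw, hlen | hB', rfl⟩ := hx
  · obtain ⟨i, rfl⟩ := List.length_eq_one_iff.1 hlen
    exact ⟨σ i, (hσ i).1, (hσ i).2, by simpa using (hφ i).symm⟩
  · exact (HasReducedWord.map_startsWithB hφ ht hB ⟨w, hw, hB', rfl⟩).mono fun _ => Or.inr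

end Substitution

def rImage : Fin 3 → List (Fin 3)
  | 0 => [0]
  | 1 => [1, 2, 1]
  | 2 => [1]

def lImage : Fin 3 → List (Fin 3)
  | 0 => [1]
  | 1 => [1, 0, 1]
  | 2 => [2]

def rPrefix : Fin 3 → Fin 3 → List (Fin 3)
  | 0, _ => [0]
  | 1, _ => [1, 2]
  | 2, 0 => [1, 0]
  | _, _ => [2]

def lPrefix : Fin 3 → Fin 3 → List (Fin 3)
  | 2, _ => [2]
  | 1, _ => [1, 0]
  | 0, 2 => [1, 2]
  | _, _ => [0]

lemma prefixTable_rImage : PrefixTable rImage rPrefix := by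
  unfold PrefixTable; decide

lemma prefixTable_lImage : PrefixTable lImage lPrefix := by
  unfold PrefixTable; decide

abbrev Capped (x : Fin 3) (c : List (Fin 3)) : Prop :=
  2 ≤ c.length ∧ c.head? = some x ∧ c.getLast? = some x

theorem hasReducedWord_capped_conj_pow {w c : List (Fin 3)} {x : Fin 3} (hw : IsReduced w)
    (hwh : w.head? = some x) (hwl : w.getLast? ≠ some x) (hc : IsReduced c) (hcx : Capped x c)
    (k : ℕ) : HasReducedWord (Capped x) (wordProd w ^ k * wordProd c * (wordProd w ^ k)⁻¹) := by
  induction k with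
  | zero => exact ⟨c, hc, hcx, by simp⟩
  | succ k ih =>
    obtain ⟨c', hc', ⟨hlen, hhead, hlast⟩, heq⟩ := ih
    have hc0 : c' ≠ [] := by rintro rfl; simp at hlen
    refine ⟨w ++ c' ++ w.reverse, ?_, ⟨by simp; omega, by simp [hwh], by simp [hwh]⟩, ?_⟩
    · refine (hw.append hc' ?_).append (List.isChain_reverse.2 (hw.imp fun _ _ h => h.symm)) ?_
      · rintro y hy z hz rfl
        rw [hhead, Option.mem_some_iff] at hz
        exact hwl (hz ▸ hy)
      · rintro y hy z hz rfl
        rw [List.getLast?_append_of_ne_nil _ hc0, hlast, Option.mem_some_iff] at hy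
        rw [List.head?_reverse] at hz
        exact hwl (hy ▸ hz)
    · rw [wordProd_append, wordProd_append, wordProd_reverse, heq, pow_succ']
      group

theorem hasReducedWord_startsWithAC_conj_pow_succ {w c : List (Fin 3)} {x : Fin 3} (hx : x ≠ 1)
    (hw : IsReduced w) (hwh : w.head? = some x) (hwl : w.getLast? ≠ some x)
    (hcap : Capped x (reduce (w ++ c ++ w.reverse))) (n : ℕ) :
    HasReducedWord StartsWithAC (wordProd w ^ (n + 1) * wordProd c * (wordProd w ^ (n + 1))⁻¹) := by
  have h := hasReducedWord_capped_conj_pow hw hwh hwl (isReduced_reduce _) hcap n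
  rw [wordProd_reduce, wordProd_append, wordProd_append, wordProd_reverse] at h
  have hAC : ∀ v, Capped x v → StartsWithAC v := fun v ⟨hlen, hhead, _⟩ =>
    ⟨hlen, by rw [hhead]; simpa using hx⟩
  convert h.mono hAC using 1
  group

theorem hasReducedWord_conj_D_zpow {c : List (Fin 3)}
    (hpos : Capped 2 (reduce ([2, 1, 0] ++ c ++ [0, 1, 2])))
    (hneg : Capped 0 (reduce ([0, 1, 2] ++ c ++ [2, 1, 0]))) {k : ℤ} (hk : k ≠ 0) :
    HasReducedWord StartsWithAC (D ^ k * wordProd c * (D ^ k)⁻¹) := by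
  obtain ⟨n, rfl | rfl⟩ := Int.eq_nat_or_neg k
  all_goals obtain ⟨n, rfl⟩ := Nat.exists_eq_succ_of_ne_zero (by omega : n ≠ 0)
  · rw [zpow_natCast, D_eq_wordProd]
    exact hasReducedWord_startsWithAC_conj_pow_succ (by decide) (by decide) rfl (by decide) hpos n
  · rw [zpow_neg, zpow_natCast, ← inv_pow, D_inv_eq_wordProd]
    exact hasReducedWord_startsWithAC_conj_pow_succ (by decide) (by decide) rfl (by decide) hneg n

theorem hasReducedWord_conj_D_zpow_gen (k : ℤ) (X : Fin 3) :
    HasReducedWord (fun w => k = 0 ∧ w = [X] ∨ StartsWithAC w) (D ^ k * gen X * (D ^ k)⁻¹) := by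
  rcases eq_or_ne k 0 with rfl | hk
  · exact ⟨[X], by simp, Or.inl ⟨rfl, rfl⟩, by simp⟩
  · have h := hasReducedWord_conj_D_zpow (c := [X]) (by revert X; decide) (by revert X; decide) hk
    simpa using h.mono fun _ => Or.inr

theorem hasReducedWord_conj_D_zpow_ABA (k : ℤ) :
    HasReducedWord StartsWithAC (D ^ k * (A * B * A) * (D ^ k)⁻¹) := by
  have hABA : A * B * A = wordProd [0, 1, 0] := by simp [mul_assoc]
  rw [hABA]
  rcases eq_or_ne k 0 with rfl | hk
  · exact ⟨[0, 1, 0], by decide, by decide, by simp⟩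
  · exact hasReducedWord_conj_D_zpow (by decide) (by decide) hk

lemma hasReducedWord_gen (X : Fin 3) : HasReducedWord (· = [X]) (gen X) :=
  ⟨[X], by simp, rfl, by simp⟩

theorem conj_D_zpow_gen_inj {q k : ℤ} {X Y : Fin 3}
    (h : D ^ q * gen X * (D ^ q)⁻¹ = D ^ k * gen Y * (D ^ k)⁻¹) : q = k ∧ X = Y := by
  rw [conj_zpow_eq_conj_zpow_iff] at h
  obtain ⟨w, rfl, hw⟩ := (hasReducedWord_gen X).exists_and (h ▸ hasReducedWord_conj_D_zpow_gen _ Y)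
  rcases hw with ⟨hkq, ⟨rfl⟩⟩ | ⟨hlen, -⟩
  · exact ⟨by omega, rfl⟩
  · simp at hlen

theorem conj_D_zpow_gen_ne_conj {z : G} (hz : HasReducedWord StartsWithB z) (q k : ℤ)
    (X : Fin 3) : D ^ q * gen X * (D ^ q)⁻¹ ≠ D ^ k * z * (D ^ k)⁻¹ := by
  intro h
  rw [eq_comm, conj_zpow_eq_conj_zpow_iff] at h
  obtain ⟨w, ⟨hlen, hhead⟩, hw⟩ := hz.exists_and (h ▸ hasReducedWord_conj_D_zpow_gen _ X)
  rcases hw with ⟨-, rfl⟩ | ⟨-, hhead'⟩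
  · simp at hlen
  · exact hhead' hhead

theorem conj_D_zpow_ne_conj_ABA {z : G} (hz : HasReducedWord IsLetterOrStartsWithB z)
    (q k : ℤ) : D ^ q * z * (D ^ q)⁻¹ ≠ D ^ k * (A * B * A) * (D ^ k)⁻¹ := by
  intro h
  rw [conj_zpow_eq_conj_zpow_iff] at h
  obtain ⟨w, hlen | ⟨-, hhead⟩, hlen', hhead'⟩ :=
    hz.exists_and (h ▸ hasReducedWord_conj_D_zpow_ABA _)
  · omega
  · exact hhead' hhead

lemma exists_eq_conj_D_zpow_gen {P : ℤ → G} (hP0 : ∀ m : ℤ, P (3 * m) = D ^ m * A * (D ^ m)⁻¹)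
    (hP1 : ∀ m : ℤ, P (3 * m + 1) = D ^ m * B * (D ^ m)⁻¹)
    (hP2 : ∀ m : ℤ, P (3 * m + 2) = D ^ m * C * (D ^ m)⁻¹) (m : ℤ) :
    ∃ (q : ℤ) (X : Fin 3), m = 3 * q + X ∧ P m = D ^ q * gen X * (D ^ q)⁻¹ := by
  rcases (by omega : m % 3 = 0 ∨ m % 3 = 1 ∨ m % 3 = 2) with h | h | h
  · exact ⟨m / 3, 0, by rw [Fin.val_zero]; omega, (congrArg P (by omega)).trans (hP0 _)⟩
  · exact ⟨m / 3, 1, by rw [Fin.val_one]; omega, (congrArg P (by omega)).trans (hP1 _)⟩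
  · exact ⟨m / 3, 2, by rw [Fin.val_two]; omega, (congrArg P (by omega)).trans (hP2 _)⟩

end FreeProdZ2

open FreeProdZ2

section RunsOfR

variable {R L : MulAut G} {f F : ℤ → MulAut G}

theorem apply_D_eq (hR : ∀ i, R (gen i) = wordProd (rImage i))
    (hL : ∀ i, L (gen i) = wordProd (lImage i)) (hf : ∀ k, f k = R ∨ f k = L)
    (hF : ∀ n, F n = F (n - 1) * f n) (hF0 : F 0 = 1) (k : ℤ) : F k D = D := by
  have hfD : ∀ j, f j D = D := fun j => by
    rw [D_eq_wordProd]
    rcases hf j with h | h <;> rw [h]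
    exacts [map_wordProd_eq_wordProd hR (by decide), map_wordProd_eq_wordProd hL (by decide)]
  rcases le_total 0 k with hk | hk
  · rw [apply_eq_apply_of_fixed hF hk fun j _ _ => hfD j, hF0, MulAut.one_apply]
  · rw [← apply_eq_apply_of_fixed hF hk fun j _ _ => hfD j, hF0, MulAut.one_apply]

theorem mapsTo_startsWithB (hR : ∀ i, R (gen i) = wordProd (rImage i))
    (hL : ∀ i, L (gen i) = wordProd (lImage i)) {φ : MulAut G} (hφ : φ = R ∨ φ = L) :
    Set.MapsTo φ {x | HasReducedWord StartsWithB x} {x | HasReducedWord StartsWithB x} := by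
  rcases hφ with rfl | rfl
  · exact fun x hx => hx.map_startsWithB hR prefixTable_rImage (by decide)
  · exact fun x hx => hx.map_startsWithB hL prefixTable_lImage (by decide)

theorem mapsTo_letterOrStartsWithB (hR : ∀ i, R (gen i) = wordProd (rImage i))
    (hL : ∀ i, L (gen i) = wordProd (lImage i)) {φ : MulAut G} (hφ : φ = R ∨ φ = L) :
    Set.MapsTo φ {x | HasReducedWord IsLetterOrStartsWithB x}
      {x | HasReducedWord IsLetterOrStartsWithB x} := by
  rcases hφ with rfl | rfl
  · exact fun x hx =>
      hx.map_letterOrStartsWithB hR prefixTable_rImage (by decide) (by decide)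
  · exact fun x hx =>
      hx.map_letterOrStartsWithB hL prefixTable_lImage (by decide) (by decide)

theorem hasReducedWord_startsWithB_map_B (hR : ∀ i, R (gen i) = wordProd (rImage i))
    (hL : ∀ i, L (gen i) = wordProd (lImage i)) {φ : MulAut G} (hφ : φ = R ∨ φ = L) :
    HasReducedWord StartsWithB (φ B) := by
  rcases hφ with rfl | rfl
  exacts [⟨[1, 2, 1], by decide, by decide, (hR 1).symm⟩,
    ⟨[1, 0, 1], by decide, by decide, (hL 1).symm⟩]

variable {n N : ℤ}

theorem IsLRun.apply_ABA (hrun : IsLRun R L f n N) (hF : ∀ n, F n = F (n - 1) * f n)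
    (hRA : R A = A) (hLA : L A = B) (hLB : L B = B * A * B⁻¹) :
    F N (A * B * A) = F (n - 1) B := by
  have hLABA : L (A * B * A) = A := by
    have hBB : B * B = 1 := gen_mul_self 1
    calc L (A * B * A) = B * (B * A * B⁻¹) * B := by rw [map_mul, map_mul, hLA, hLB]
      _ = (B * B) * A * (B * B) := by simp only [B_inv, mul_assoc]
      _ = A := by rw [hBB, one_mul, mul_one]
  rw [apply_eq_apply_sub_one hF, hrun.right_eq, hLABA,
    hrun.apply_eq_of_fixed hF hRA hLA (by linarith [hrun.lt]) (by omega)]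

theorem IsLRun.apply_CBC (hrun : IsLRun R L f n N) (hR : ∀ i, R (gen i) = wordProd (rImage i))
    (hL : ∀ i, L (gen i) = wordProd (lImage i)) (hF : ∀ n, F n = F (n - 1) * f n)
    (hD : ∀ k, F k D = D) : F N (C * B * C⁻¹) = D * F (n - 1) B * D⁻¹ := by
  have hCBC : C * B * C⁻¹ = wordProd [2, 1, 2] := by simp [mul_assoc]
  have hDBD : D * B * D⁻¹ = wordProd [2, 1, 0, 1, 0, 1, 2] := by
    simp [D_eq_wordProd, mul_assoc]
  -- `E = C·B·A·B·C` is fixed by `R`, and `L` carries `C·B·C` to `E` and `E` to `D·B·D⁻¹`.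
  have hE : F (N - 1) (wordProd [2, 1, 0, 1, 2]) = F n (wordProd [2, 1, 0, 1, 2]) :=
    apply_eq_apply_of_fixed hF (by linarith [hrun.lt]) fun k hk hkN => by
      rw [hrun.between_eq k hk (by omega)]
      exact map_wordProd_eq_wordProd hR (by decide)
  rw [hCBC, apply_eq_apply_sub_one hF, hrun.right_eq,
    map_wordProd_eq_wordProd hL (v := [2, 1, 0, 1, 2]) (by decide), hE,
    apply_eq_apply_sub_one hF, hrun.left_eq,
    map_wordProd_eq_wordProd hL (v := [2, 1, 0, 1, 0, 1, 2]) (by decide), ← hDBD]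
  simp only [map_mul, map_inv, hD]

theorem IsLRun.eq_of_conj_apply_eq (hrun : IsLRun R L f n N)
    (hR : ∀ i, R (gen i) = wordProd (rImage i)) (hL : ∀ i, L (gen i) = wordProd (lImage i))
    (hf : ∀ k, f k = R ∨ f k = L) (hF : ∀ n, F n = F (n - 1) * f n) (hD : ∀ k, F k D = D)
    {q m n' : ℤ} {X : Fin 3}
    (h : D ^ q * F (n' - 1) (gen X) * (D ^ q)⁻¹ = D ^ m * F (n - 1) B * (D ^ m)⁻¹) :
    q = m ∧ (X = 1 ∧ n' = n ∨ X = 0 ∧ n < n' ∧ n' ≤ N) := by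
  have hRA : R A = A := by simpa [rImage] using hR 0
  have hLA : L A = B := by simpa [lImage] using hL 0
  have hLB : L B = B * A * B⁻¹ := by simpa [lImage, mul_assoc] using hL 1
  have hinj : ∀ {k q' m' : ℤ} {x y : G},
      D ^ q' * F k x * (D ^ q')⁻¹ = D ^ m' * F k y * (D ^ m')⁻¹ →
        D ^ q' * x * (D ^ q')⁻¹ = D ^ m' * y * (D ^ m')⁻¹ := fun h => by
    rwa [← map_conj_zpow _ (hD _), ← map_conj_zpow _ (hD _), (F _).injective.eq_iff] at h
  rcases lt_trichotomy n' n with hlt | rfl | hgt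
  · obtain ⟨z, hz, hBz⟩ := exists_apply_eq_apply_of_mapsTo hF (a := n' - 1) (b := n - 1 - 1)
      (by omega) (fun k _ _ => mapsTo_startsWithB hR hL (hf k)) _
      (hasReducedWord_startsWithB_map_B hR hL (hf (n - 1)))
    rw [apply_eq_apply_sub_one hF (n - 1), hBz] at h
    exact (conj_D_zpow_gen_ne_conj hz _ _ _ (hinj h)).elim
  · obtain ⟨rfl, rfl⟩ := conj_D_zpow_gen_inj (hinj h)
    exact ⟨rfl, Or.inl ⟨rfl, rfl⟩⟩
  rcases le_or_gt n' N with hle | hNlt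
  · rw [← hrun.apply_eq_of_fixed hF hRA hLA (k := n' - 1) (by omega) (by omega)] at h
    obtain ⟨rfl, rfl⟩ := conj_D_zpow_gen_inj (hinj h)
    exact ⟨rfl, Or.inr ⟨rfl, hgt, hle⟩⟩
  · obtain ⟨z, hz, hXz⟩ := exists_apply_eq_apply_of_mapsTo hF (a := N) (b := n' - 1) (by omega)
      (fun k _ _ => mapsTo_letterOrStartsWithB hR hL (hf k)) (gen X)
      ⟨[X], by simp, Or.inl rfl, by simp⟩
    rw [hXz, ← hrun.apply_ABA hF hRA hLA hLB] at h
    exact (conj_D_zpow_ne_conj_ABA hz _ _ (hinj h)).elim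

end RunsOfR

theorem stmt16_general
    (R L : MulAut G)
    (hRA : R A = A) (hRB : R B = B * C * B⁻¹) (hRC : R C = B)
    (hLA : L A = B) (hLB : L B = B * A * B⁻¹) (hLC : L C = C)
    (P : ℤ → G)
    (hP0 : ∀ m : ℤ, P (3 * m) = D ^ m * A * (D ^ m)⁻¹)
    (hP1 : ∀ m : ℤ, P (3 * m + 1) = D ^ m * B * (D ^ m)⁻¹)
    (hP2 : ∀ m : ℤ, P (3 * m + 2) = D ^ m * C * (D ^ m)⁻¹)
    (f : ℤ → MulAut G) (hfRL : ∀ n : ℤ, f n = R ∨ f n = L)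
    (F : ℤ → MulAut G) (hF0 : F 0 = 1) (hF : ∀ n : ℤ, F n = F (n - 1) * f n)
    (Q : ℤ → ℤ → G) (hQ : ∀ m n : ℤ, Q m n = F (n - 1) (P m))
    (PP : ℤ → ℤ → G)
    (hPPe : ∀ m n : ℤ, PP (2 * m) n = D ^ m * F (n - 1) B * (D ^ m)⁻¹)
    (hPPo : ∀ m n : ℤ, PP (2 * m + 1) n = D ^ m * F n (C * B * C⁻¹) * (D ^ m)⁻¹)
    (np : ℤ → ℤ) (hnp : ∀ n : ℤ, IsLeast {k : ℤ | n < k ∧ f k = f n} (np n)) :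
    ∀ m n : ℤ, f n = L →
      PP (2 * m) n = PP (2 * m - 1) (np n) ∧
      ∀ m' n' : ℤ, Q m' n' = PP (2 * m) n ↔
        ((m' = 3 * m + 1 ∧ n' = n) ∨ (m' = 3 * m ∧ n + 1 ≤ n' ∧ n' ≤ np n)) := by
  have hR : ∀ i, R (gen i) = wordProd (rImage i) := by
    intro i; fin_cases i <;> simp [rImage, mul_assoc, *]
  have hL : ∀ i, L (gen i) = wordProd (lImage i) := by
    intro i; fin_cases i <;> simp [lImage, mul_assoc, *]
  have hD := apply_D_eq hR hL hfRL hF hF0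
  intro m n hfn
  obtain ⟨⟨hnN, hfN⟩, hmin⟩ := hnp n
  have hrun : IsLRun R L f n (np n) := ⟨hnN, hfn, hfN.trans hfn, fun k hk hkN =>
    (hfRL k).resolve_right fun hk' => (hmin ⟨hk, hk'.trans hfn.symm⟩).not_gt hkN⟩
  refine ⟨?_, fun m' n' => ⟨fun h => ?_, ?_⟩⟩
  · rw [hPPe, show 2 * m - 1 = 2 * (m - 1) + 1 by ring, hPPo, hrun.apply_CBC hR hL hF hD]
    group
  · obtain ⟨q, X, rfl, hP⟩ := exists_eq_conj_D_zpow_gen hP0 hP1 hP2 m'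
    rw [hQ, hP, hPPe, map_conj_zpow _ (hD _)] at h
    obtain ⟨rfl, ⟨rfl, rfl⟩ | ⟨rfl, hn', hn'N⟩⟩ := hrun.eq_of_conj_apply_eq hR hL hfRL hF hD h
    · exact Or.inl ⟨by simp, rfl⟩
    · exact Or.inr ⟨by simp, hn', hn'N⟩
  · rintro (⟨rfl, rfl⟩ | ⟨rfl, hn', hn'N⟩)
    · rw [hQ, hP1, hPPe, map_conj_zpow _ (hD _)]
    · rw [hQ, hP0, hPPe, map_conj_zpow _ (hD _),
        hrun.apply_eq_of_fixed hF hRA hLA (by omega) (by omega)]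

/-- If f_n = L then P_{2m,n} = P_{2m−1,n₊}, and Q_{m',n'} equals this element exactly
for (m',n') in {(3m+1,n)} ∪ {(3m,k) | n+1 ≤ k ≤ n₊}. -/
theorem stmt16
    (R L : MulAut G)
    (hRA : R A = A) (hRB : R B = B * C * B⁻¹) (hRC : R C = B)
    (hLA : L A = B) (hLB : L B = B * A * B⁻¹) (hLC : L C = C)
    (P : ℤ → G)
    (hP0 : ∀ m : ℤ, P (3 * m) = D ^ m * A * (D ^ m)⁻¹)
    (hP1 : ∀ m : ℤ, P (3 * m + 1) = D ^ m * B * (D ^ m)⁻¹)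
    (hP2 : ∀ m : ℤ, P (3 * m + 2) = D ^ m * C * (D ^ m)⁻¹)
    (p : ℤ) (hp : 2 ≤ p)
    (f : ℤ → MulAut G) (hfRL : ∀ n : ℤ, f n = R ∨ f n = L)
    (hfper : ∀ n : ℤ, f (n + p) = f n) (hf0 : f 0 = L) (hf1 : f 1 = R)
    (F : ℤ → MulAut G) (hF0 : F 0 = 1) (hF : ∀ n : ℤ, F n = F (n - 1) * f n)
    (Q : ℤ → ℤ → G) (hQ : ∀ m n : ℤ, Q m n = F (n - 1) (P m))
    (PP : ℤ → ℤ → G)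
    (hPPe : ∀ m n : ℤ, PP (2 * m) n = D ^ m * F (n - 1) B * (D ^ m)⁻¹)
    (hPPo : ∀ m n : ℤ, PP (2 * m + 1) n = D ^ m * F n (C * B * C⁻¹) * (D ^ m)⁻¹)
    (np : ℤ → ℤ) (hnp : ∀ n : ℤ, IsLeast {k : ℤ | n < k ∧ f k = f n} (np n)) :
    ∀ m n : ℤ, f n = L →
      PP (2 * m) n = PP (2 * m - 1) (np n) ∧
      ∀ m' n' : ℤ, Q m' n' = PP (2 * m) n ↔
        ((m' = 3 * m + 1 ∧ n' = n) ∨ (m' = 3 * m ∧ n + 1 ≤ n' ∧ n' ≤ np n)) :=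
  stmt16_general R L hRA hRB hRC hLA hLB hLC P hP0 hP1 hP2 f hfRL F hF0 hF Q hQ PP hPPe hPPo np hnp
end
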